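/- arXiv:2501.06799 — 13 statements merged into one kernel-verified Lean document; each statement's English description precedes it below -/
import Mathlib

section
/- There exists a fair division instance with two agents and two items whose valuations take values only in {-1, 1} that admits no EQ1 allocation: concretely, if agent 1 values both items at -1 and agent 2 values both items at 1, then none of the allocations of the two items is EQ1. -/
open Finset

/-- A complete allocation: pairwise disjoint bundles covering all items. -/
def isAllocation {n : ℕ} {ι : Type*} [Fintype ι] [DecidableEq ι]
    (A : Fin n → Finset ι) : Prop :=
  (∀ i j : Fin n, i ≠ j → Disjoint (A i) (A j)) ∧
    Finset.univ.biUnion A = Finset.univ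

/-- Equitability up to one item. -/
def EQ1 {n : ℕ} {ι : Type*} [DecidableEq ι]
    (v : Fin n → ι → ℤ) (A : Fin n → Finset ι) : Prop :=
  ∀ i j : Fin n, ∑ o ∈ A i, v i o < ∑ o ∈ A j, v j o →
    (∃ g ∈ A j, 0 ≤ v j g ∧ ∑ o ∈ (A j).erase g, v j o ≤ ∑ o ∈ A i, v i o) ∨
    (∃ c ∈ A i, v i c ≤ 0 ∧ ∑ o ∈ A j, v j o ≤ ∑ o ∈ (A i).erase c, v i o)

/-- There is a fair division instance with two agents and two items, with
valuations in {-1, 1}, that admits no EQ1 allocation: agent 1 values both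
items at -1, agent 2 values both items at 1. -/
theorem stmt0 :
    ∀ A : Fin 2 → Finset (Fin 2), isAllocation A →
      ¬ EQ1 (fun i _ => if i = 0 then (-1 : ℤ) else 1) A := by
  unfold isAllocation EQ1
  decide
end

section
/- Let b_1, …, b_m be positive integers with ∑_{k=1}^m b_k = 2T for a positive integer T. Consider the fair division instance with 4 agents and m + 4 items o_1, …, o_m, d_1, d_2, d_3, d_4, where agents 1 and 2 each value o_k at b_k for every k ∈ [m] and each d_ℓ at -3T, and agents 3 and 4 each value every o_k at 0 and each d_ℓ at T. Then this instance admits an EQ1 allocation if and only if there exists a subset S ⊆ [m] with ∑_{k ∈ S} b_k = T. -/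
open Finset

/-- Valuations of the reduced instance: agents 0,1 value set-item `k` at `b k`
and each dummy item at `-3T`; agents 2,3 value set-items at 0 and dummy items at `T`. -/
def v1 {m : ℕ} (b : Fin m → ℤ) (T : ℤ) : Fin 4 → (Fin m ⊕ Fin 4) → ℤ :=
  fun i o =>
    match o with
    | Sum.inl k => if (i : ℕ) < 2 then b k else 0
    | Sum.inr _ => if (i : ℕ) < 2 then -3 * T else T

/-- good value of an item -/
def gval {m : ℕ} (b : Fin m → ℤ) : Fin m ⊕ Fin 4 → ℤ := Sum.elim b 0

/-- dummy indicator of an item -/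
def dind {m : ℕ} : Fin m ⊕ Fin 4 → ℤ := Sum.elim 0 1

lemma dind_nonneg {m : ℕ} (o : Fin m ⊕ Fin 4) : 0 ≤ dind o := by
  cases o <;> simp [dind]

lemma v1_low {m : ℕ} (b : Fin m → ℤ) (T : ℤ) {i : Fin 4} (hi : (i : ℕ) < 2)
    (o : Fin m ⊕ Fin 4) : v1 b T i o = gval b o - 3 * T * dind o := by
  cases o <;> simp [v1, gval, dind, hi] <;> ring

lemma v1_high {m : ℕ} (b : Fin m → ℤ) (T : ℤ) {i : Fin 4} (hi : ¬ (i : ℕ) < 2)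
    (o : Fin m ⊕ Fin 4) : v1 b T i o = T * dind o := by
  cases o <;> simp [v1, gval, dind, hi]

set_option maxHeartbeats 1000000 in
/-- The reduced instance admits an EQ1 allocation iff the 2-partition instance
is a yes-instance. -/
theorem stmt1 (m : ℕ) (T : ℤ) (hT : 0 < T) (b : Fin m → ℤ)
    (hb : ∀ k, 0 < b k) (hsum : ∑ k, b k = 2 * T) :
    (∃ A : Fin 4 → Finset (Fin m ⊕ Fin 4), isAllocation A ∧ EQ1 (v1 b T) A) ↔
      ∃ S : Finset (Fin m), ∑ k ∈ S, b k = T := by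
  constructor
  · rintro ⟨A, ⟨hdisj, hcover⟩, heq⟩
    -- abbreviations
    set s : Fin 4 → ℤ := fun i => ∑ o ∈ A i, gval b o with hs
    set d : Fin 4 → ℤ := fun i => ∑ o ∈ A i, dind o with hd
    have hulow : ∀ i : Fin 4, (i : ℕ) < 2 →
        ∑ o ∈ A i, v1 b T i o = s i - 3 * T * d i := by
      intro i hi
      simp only [hs, hd, Finset.mul_sum, ← Finset.sum_sub_distrib]
      exact Finset.sum_congr rfl fun o _ => v1_low b T hi o
    have huhigh : ∀ i : Fin 4, ¬ (i : ℕ) < 2 →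
        ∑ o ∈ A i, v1 b T i o = T * d i := by
      intro i hi
      simp only [hs, hd, Finset.mul_sum]
      exact Finset.sum_congr rfl fun o _ => v1_high b T hi o
    have hpd : Set.PairwiseDisjoint (↑(Finset.univ : Finset (Fin 4))) A :=
      fun i _ j _ hij => hdisj i j hij
    have hsum_split : ∀ f : Fin m ⊕ Fin 4 → ℤ,
        ∑ i : Fin 4, ∑ o ∈ A i, f o = ∑ o : Fin m ⊕ Fin 4, f o := by
      intro f
      rw [← Finset.sum_biUnion hpd, hcover]
    have hsum_d : d 0 + d 1 + d 2 + d 3 = 4 := by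
      have h := hsum_split dind
      rw [Fin.sum_univ_four] at h
      rw [hd]
      rw [h, Fintype.sum_sum_type]
      simp [dind]
    have hsum_s : s 0 + s 1 + s 2 + s 3 = 2 * T := by
      have h := hsum_split (gval b)
      rw [Fin.sum_univ_four] at h
      rw [hs]
      rw [h, Fintype.sum_sum_type]
      simpa [gval] using hsum
    have hdnn : ∀ i, 0 ≤ d i := fun i =>
      Finset.sum_nonneg fun o _ => dind_nonneg o
    have hsnn : ∀ i, 0 ≤ s i := fun i =>
      Finset.sum_nonneg fun o _ => by
        cases o with
        | inl k => exact (hb k).le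
        | inr l => simp [gval]
    -- key lemma for a low agent i vs a high agent j
    have keyLow : ∀ i j : Fin 4, (i : ℕ) < 2 → ¬ (j : ℕ) < 2 →
        s i - 3 * T * d i < T * d j →
        (T * d j - T ≤ s i - 3 * T * d i) ∨
          (1 ≤ d i ∧ T * d j - 3 * T ≤ s i - 3 * T * d i) := by
      intro i j hi hj htrig
      have h := heq i j (by rw [hulow i hi, huhigh j hj]; exact htrig)
      rcases h with ⟨g, hg, _hg0, hle⟩ | ⟨c, hc, hc0, hle⟩
      · left
        rw [Finset.sum_erase_eq_sub hg, hulow i hi, huhigh j hj] at hle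
        have hvg : v1 b T j g ≤ T := by
          cases g <;> simp [v1, hj] <;> linarith
        linarith
      · right
        cases c with
        | inl k =>
          exfalso
          have : v1 b T i (Sum.inl k) = b k := by simp [v1, hi]
          rw [this] at hc0
          exact absurd hc0 (not_le.mpr (hb k))
        | inr l =>
          have hvc : v1 b T i (Sum.inr l) = -3 * T := by simp [v1, hi]
          rw [Finset.sum_erase_eq_sub hc, hulow i hi, huhigh j hj, hvc] at hle
          refine ⟨?_, by linarith⟩
          have := Finset.single_le_sum (f := dind) (fun o _ => dind_nonneg o) hc
          simpa [dind, hd] using this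
    -- key lemma for two high agents
    have keyHigh : ∀ j k : Fin 4, ¬ (j : ℕ) < 2 → ¬ (k : ℕ) < 2 →
        d k ≤ d j + 1 := by
      intro j k hj hk
      by_contra h
      push_neg at h
      have hjk : d j < d k := by linarith
      have htrig : T * d j < T * d k := by
        exact mul_lt_mul_of_pos_left hjk hT
      have hjk' : j ≠ k := by
        intro he; rw [he] at hjk; exact lt_irrefl _ hjk
      have hh := heq j k (by rw [huhigh j hj, huhigh k hk]; exact htrig)
      rcases hh with ⟨g, hg, _hg0, hle⟩ | ⟨c, hc, hc0, hle⟩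
      · rw [Finset.sum_erase_eq_sub hg, huhigh j hj, huhigh k hk] at hle
        have hvg : v1 b T k g ≤ T := by
          cases g <;> simp [v1, hk] <;> linarith
        have h2 : T * (d j + 2) ≤ T * d k := by
          have : d j + 2 ≤ d k := by linarith
          exact mul_le_mul_of_nonneg_left this hT.le
        nlinarith
      · cases c with
        | inl q =>
          have hvc : v1 b T j (Sum.inl q) = 0 := by simp [v1, hj]
          rw [Finset.sum_erase_eq_sub hc, huhigh j hj, huhigh k hk, hvc] at hle
          nlinarith
        | inr l =>
          have hvc : v1 b T j (Sum.inr l) = T := by simp [v1, hj]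
          rw [hvc] at hc0
          linarith
    have h2le : (2:ℕ) < 4 := by norm_num
    have K02 := keyLow 0 2 (by decide) (by decide)
    have K03 := keyLow 0 3 (by decide) (by decide)
    have K12 := keyLow 1 2 (by decide) (by decide)
    have K13 := keyLow 1 3 (by decide) (by decide)
    have H23 : d 3 ≤ d 2 + 1 := keyHigh 2 3 (by decide) (by decide)
    have H32 : d 2 ≤ d 3 + 1 := keyHigh 3 2 (by decide) (by decide)
    have hs01 : s 0 + s 1 ≤ 2 * T := by
      have := hsnn 2; have := hsnn 3; linarith
    have hs0le : s 0 ≤ 2 * T := by have := hsnn 1; linarith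
    have hs1le : s 1 ≤ 2 * T := by have := hsnn 0; linarith
    -- d 0 ≤ 1 and d 1 ≤ 1
    have hd0le : d 0 ≤ 1 := by
      by_contra h
      push_neg at h
      have h2 : 2 ≤ d 0 := by linarith
      have hm : T * 2 ≤ T * d 0 := mul_le_mul_of_nonneg_left h2 hT.le
      have hm2 : 0 ≤ T * d 2 := mul_nonneg hT.le (hdnn 2)
      have htrig : s 0 - 3 * T * d 0 < T * d 2 := by nlinarith
      rcases K02 htrig with h1 | ⟨_, h1⟩ <;> nlinarith
    have hd1le : d 1 ≤ 1 := by
      by_contra h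
      push_neg at h
      have h2 : 2 ≤ d 1 := by linarith
      have hm : T * 2 ≤ T * d 1 := mul_le_mul_of_nonneg_left h2 hT.le
      have hm2 : 0 ≤ T * d 2 := mul_nonneg hT.le (hdnn 2)
      have htrig : s 1 - 3 * T * d 1 < T * d 2 := by nlinarith
      rcases K12 htrig with h1 | ⟨_, h1⟩ <;> nlinarith
    -- it suffices to show s 0 = T
    suffices hkey : s 0 = T by
      refine ⟨Finset.univ.filter (fun k => Sum.inl k ∈ A 0), ?_⟩
      have himg : (Finset.univ.filter (fun k => Sum.inl k ∈ A 0)).image Sum.inl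
          = (A 0).filter (fun o => o.isLeft = true) := by
        ext o
        cases o <;> simp
      have h1 : ∑ k ∈ Finset.univ.filter (fun k => Sum.inl k ∈ A 0), b k
          = ∑ o ∈ (A 0).filter (fun o => o.isLeft = true), gval b o := by
        rw [← himg, Finset.sum_image (by intro x _ y _ h; exact Sum.inl_injective h)]
        simp [gval]
      have h2 : ∑ o ∈ (A 0).filter (fun o => o.isLeft = true), gval b o = s 0 := by
        rw [hs]
        apply Finset.sum_filter_of_ne
        intro o _ ho
        cases o with
        | inl k => rfl
        | inr l => exact absurd rfl ho
      rw [h1, h2, hkey]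
    -- now pure arithmetic case analysis
    have hd0 : d 0 = 0 ∨ d 0 = 1 := by
      have := hdnn 0; omega
    have hd1 : d 1 = 0 ∨ d 1 = 1 := by
      have := hdnn 1; omega
    rcases hd0 with hd0 | hd0 <;> rcases hd1 with hd1 | hd1
    · -- d0 = 0, d1 = 0 : d2 = d3 = 2
      have hd2 : d 2 = 2 := by omega
      have hd3 : d 3 = 2 := by omega
      rw [hd0, hd2] at K02
      rw [hd1, hd2] at K12
      have h0 : T ≤ s 0 := by
        by_contra h
        push_neg at h
        rcases K02 (by linarith) with h1 | ⟨h1, _⟩ <;> linarith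
      have h1 : T ≤ s 1 := by
        by_contra h
        push_neg at h
        rcases K12 (by linarith) with h1 | ⟨h1, _⟩ <;> linarith
      linarith
    · -- d0 = 0, d1 = 1 : {d2,d3} = {2,1}
      exfalso
      have hcase : (d 2 = 2 ∧ d 3 = 1) ∨ (d 2 = 1 ∧ d 3 = 2) := by omega
      rcases hcase with ⟨hd2, hd3⟩ | ⟨hd2, hd3⟩
      · rw [hd0, hd2] at K02
        rw [hd1, hd2] at K12
        have h0 : T ≤ s 0 := by
          by_contra h
          push_neg at h
          rcases K02 (by linarith) with h1 | ⟨h1, _⟩ <;> linarith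
        have hs1T : s 1 ≤ T := by linarith
        rcases K12 (by linarith) with h1 | ⟨_, h1⟩ <;> linarith
      · rw [hd0, hd3] at K03
        rw [hd1, hd3] at K13
        have h0 : T ≤ s 0 := by
          by_contra h
          push_neg at h
          rcases K03 (by linarith) with h1 | ⟨h1, _⟩ <;> linarith
        have hs1T : s 1 ≤ T := by linarith
        rcases K13 (by linarith) with h1 | ⟨_, h1⟩ <;> linarith
    · -- d0 = 1, d1 = 0 : {d2,d3} = {2,1}
      exfalso
      have hcase : (d 2 = 2 ∧ d 3 = 1) ∨ (d 2 = 1 ∧ d 3 = 2) := by omega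
      rcases hcase with ⟨hd2, hd3⟩ | ⟨hd2, hd3⟩
      · rw [hd1, hd2] at K12
        rw [hd0, hd2] at K02
        have h1 : T ≤ s 1 := by
          by_contra h
          push_neg at h
          rcases K12 (by linarith) with h1 | ⟨h1, _⟩ <;> linarith
        have hs0T : s 0 ≤ T := by linarith
        rcases K02 (by linarith) with h1 | ⟨_, h1⟩ <;> linarith
      · rw [hd1, hd3] at K13
        rw [hd0, hd3] at K03
        have h1 : T ≤ s 1 := by
          by_contra h
          push_neg at h
          rcases K13 (by linarith) with h1 | ⟨h1, _⟩ <;> linarith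
        have hs0T : s 0 ≤ T := by linarith
        rcases K03 (by linarith) with h1 | ⟨_, h1⟩ <;> linarith
    · -- d0 = 1, d1 = 1 : d2 = d3 = 1
      have hd2 : d 2 = 1 := by omega
      rw [hd0, hd2] at K02
      rw [hd1, hd2] at K12
      have h0 : T ≤ s 0 := by
        by_contra h
        push_neg at h
        rcases K02 (by linarith) with h1 | ⟨_, h1⟩ <;> linarith
      have h1 : T ≤ s 1 := by
        by_contra h
        push_neg at h
        rcases K12 (by linarith) with h1 | ⟨_, h1⟩ <;> linarith
      linarith
  · rintro ⟨S, hS⟩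
    refine ⟨![S.image Sum.inl, Sᶜ.image Sum.inl,
      {Sum.inr 0, Sum.inr 1}, {Sum.inr 2, Sum.inr 3}], ⟨?_, ?_⟩, ?_⟩
    · intro i j hij
      fin_cases i <;> fin_cases j <;>
        first
          | exact absurd rfl hij
          | (rw [Finset.disjoint_left]
             rintro (k | l) hk hk' <;> simp at hk hk' <;>
               first | exact hk' hk | exact hk hk' | omega)
    · rw [Finset.eq_univ_iff_forall]
      rintro (k | l)
      · rw [Finset.mem_biUnion]
        by_cases hk : k ∈ S
        · exact ⟨0, Finset.mem_univ _, by simp [hk]⟩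
        · exact ⟨1, Finset.mem_univ _, by simp [hk]⟩
      · rw [Finset.mem_biUnion]
        fin_cases l
        · exact ⟨2, Finset.mem_univ _, by simp⟩
        · exact ⟨2, Finset.mem_univ _, by simp⟩
        · exact ⟨3, Finset.mem_univ _, by simp⟩
        · exact ⟨3, Finset.mem_univ _, by simp⟩
    · have h0 : ∑ o ∈ S.image Sum.inl, v1 b T 0 o = T := by
        rw [Finset.sum_image (by intro x _ y _ h; exact Sum.inl_injective h)]
        simpa [v1] using hS
      have h1 : ∑ o ∈ Sᶜ.image Sum.inl, v1 b T 1 o = T := by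
        rw [Finset.sum_image (by intro x _ y _ h; exact Sum.inl_injective h)]
        have hc := Finset.sum_add_sum_compl S b
        have he : ∀ k, v1 b T 1 (Sum.inl k) = b k := fun k => rfl
        simp only [he]
        linarith
      have h2 : ∑ o ∈ ({Sum.inr 0, Sum.inr 1} : Finset (Fin m ⊕ Fin 4)),
          v1 b T 2 o = 2 * T := by
        rw [Finset.sum_pair (by simp)]
        show T + T = 2 * T
        ring
      have h3 : ∑ o ∈ ({Sum.inr 2, Sum.inr 3} : Finset (Fin m ⊕ Fin 4)),
          v1 b T 3 o = 2 * T := by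
        rw [Finset.sum_pair (by simp)]
        show T + T = 2 * T
        ring
      intro i j hlt
      fin_cases i <;> fin_cases j
      · exact absurd hlt (lt_irrefl _)
      · -- 0 vs 1
        exfalso
        have hlt0 : ∑ o ∈ S.image Sum.inl, v1 b T 0 o < ∑ o ∈ Sᶜ.image Sum.inl, v1 b T 1 o := hlt
        rw [h0, h1] at hlt0
        exact absurd hlt0 (lt_irrefl _)
      · -- 0 vs 2
        left
        refine ⟨Sum.inr 0, ?_, ?_, ?_⟩
        · show (Sum.inr 0 : Fin m ⊕ Fin 4) ∈ ({Sum.inr 0, Sum.inr 1} : Finset (Fin m ⊕ Fin 4))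
          simp
        · show (0:ℤ) ≤ T
          exact hT.le
        · show ∑ o ∈ ({Sum.inr 0, Sum.inr 1} : Finset (Fin m ⊕ Fin 4)).erase (Sum.inr 0),
              v1 b T 2 o ≤ ∑ o ∈ S.image Sum.inl, v1 b T 0 o
          rw [h0, Finset.erase_insert (by simp), Finset.sum_singleton]
          show T ≤ T
          exact le_refl T
      · -- 0 vs 3
        left
        refine ⟨Sum.inr 2, ?_, ?_, ?_⟩
        · show (Sum.inr 2 : Fin m ⊕ Fin 4) ∈ ({Sum.inr 2, Sum.inr 3} : Finset (Fin m ⊕ Fin 4))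
          simp
        · show (0:ℤ) ≤ T
          exact hT.le
        · show ∑ o ∈ ({Sum.inr 2, Sum.inr 3} : Finset (Fin m ⊕ Fin 4)).erase (Sum.inr 2),
              v1 b T 3 o ≤ ∑ o ∈ S.image Sum.inl, v1 b T 0 o
          rw [h0, Finset.erase_insert (by simp), Finset.sum_singleton]
          show T ≤ T
          exact le_refl T
      · -- 1 vs 0
        exfalso
        have hlt0 : ∑ o ∈ Sᶜ.image Sum.inl, v1 b T 1 o < ∑ o ∈ S.image Sum.inl, v1 b T 0 o := hlt
        rw [h1, h0] at hlt0
        exact absurd hlt0 (lt_irrefl _)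
      · exact absurd hlt (lt_irrefl _)
      · -- 1 vs 2
        left
        refine ⟨Sum.inr 0, ?_, ?_, ?_⟩
        · show (Sum.inr 0 : Fin m ⊕ Fin 4) ∈ ({Sum.inr 0, Sum.inr 1} : Finset (Fin m ⊕ Fin 4))
          simp
        · show (0:ℤ) ≤ T
          exact hT.le
        · show ∑ o ∈ ({Sum.inr 0, Sum.inr 1} : Finset (Fin m ⊕ Fin 4)).erase (Sum.inr 0),
              v1 b T 2 o ≤ ∑ o ∈ Sᶜ.image Sum.inl, v1 b T 1 o
          rw [h1, Finset.erase_insert (by simp), Finset.sum_singleton]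
          show T ≤ T
          exact le_refl T
      · -- 1 vs 3
        left
        refine ⟨Sum.inr 2, ?_, ?_, ?_⟩
        · show (Sum.inr 2 : Fin m ⊕ Fin 4) ∈ ({Sum.inr 2, Sum.inr 3} : Finset (Fin m ⊕ Fin 4))
          simp
        · show (0:ℤ) ≤ T
          exact hT.le
        · show ∑ o ∈ ({Sum.inr 2, Sum.inr 3} : Finset (Fin m ⊕ Fin 4)).erase (Sum.inr 2),
              v1 b T 3 o ≤ ∑ o ∈ Sᶜ.image Sum.inl, v1 b T 1 o
          rw [h1, Finset.erase_insert (by simp), Finset.sum_singleton]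
          show T ≤ T
          exact le_refl T
      · -- 2 vs 0
        exfalso
        have hlt0 : ∑ o ∈ ({Sum.inr 0, Sum.inr 1} : Finset (Fin m ⊕ Fin 4)), v1 b T 2 o < ∑ o ∈ S.image Sum.inl, v1 b T 0 o := hlt
        rw [h2, h0] at hlt0
        linarith
      · -- 2 vs 1
        exfalso
        have hlt0 : ∑ o ∈ ({Sum.inr 0, Sum.inr 1} : Finset (Fin m ⊕ Fin 4)), v1 b T 2 o < ∑ o ∈ Sᶜ.image Sum.inl, v1 b T 1 o := hlt
        rw [h2, h1] at hlt0
        linarith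
      · exact absurd hlt (lt_irrefl _)
      · -- 2 vs 3
        exfalso
        have hlt0 : ∑ o ∈ ({Sum.inr 0, Sum.inr 1} : Finset (Fin m ⊕ Fin 4)), v1 b T 2 o < ∑ o ∈ ({Sum.inr 2, Sum.inr 3} : Finset (Fin m ⊕ Fin 4)), v1 b T 3 o := hlt
        rw [h2, h3] at hlt0
        exact absurd hlt0 (lt_irrefl _)
      · -- 3 vs 0
        exfalso
        have hlt0 : ∑ o ∈ ({Sum.inr 2, Sum.inr 3} : Finset (Fin m ⊕ Fin 4)), v1 b T 3 o < ∑ o ∈ S.image Sum.inl, v1 b T 0 o := hlt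
        rw [h3, h0] at hlt0
        linarith
      · -- 3 vs 1
        exfalso
        have hlt0 : ∑ o ∈ ({Sum.inr 2, Sum.inr 3} : Finset (Fin m ⊕ Fin 4)), v1 b T 3 o < ∑ o ∈ Sᶜ.image Sum.inl, v1 b T 1 o := hlt
        rw [h3, h1] at hlt0
        linarith
      · -- 3 vs 2
        exfalso
        have hlt0 : ∑ o ∈ ({Sum.inr 2, Sum.inr 3} : Finset (Fin m ⊕ Fin 4)), v1 b T 3 o < ∑ o ∈ ({Sum.inr 0, Sum.inr 1} : Finset (Fin m ⊕ Fin 4)), v1 b T 2 o := hlt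
        rw [h3, h2] at hlt0
        exact absurd hlt0 (lt_irrefl _)
      · exact absurd hlt (lt_irrefl _)
end

section
/- Every fair division instance with additive integer valuations in which each item is either an objective good or an objective chore admits an EQ1 allocation. -/
open Finset

/-- Every instance where each item is an objective good or an objective chore
admits an EQ1 allocation. -/
theorem stmt2 {n : ℕ} (hn : 0 < n) {ι : Type*} [Fintype ι] [DecidableEq ι]
    (v : Fin n → ι → ℤ)
    (hobj : ∀ o : ι, (∀ i, 0 ≤ v i o) ∨ (∀ i, v i o ≤ 0)) :
    ∃ A : Fin n → Finset ι, isAllocation A ∧ EQ1 v A := by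
  classical
  haveI hne : Nonempty (Fin n) := ⟨⟨0, hn⟩⟩
  suffices h : ∀ S : Finset ι, ∃ A : Fin n → Finset ι,
      (∀ i j : Fin n, i ≠ j → Disjoint (A i) (A j)) ∧
        Finset.univ.biUnion A = S ∧ EQ1 v A by
    obtain ⟨A, h1, h2, h3⟩ := h Finset.univ
    exact ⟨A, ⟨h1, h2⟩, h3⟩
  intro S
  induction S using Finset.induction_on with
  | empty =>
    refine ⟨fun _ => ∅, fun _ _ _ => disjoint_empty_left _, by ext x; simp, ?_⟩
    intro i j h
    simp at h
  | @insert a S ha ih =>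
    obtain ⟨A, hdisj, hcov, heq⟩ := ih
    have hnotin : ∀ j, a ∉ A j := by
      intro j hj
      exact ha (by rw [← hcov]; exact mem_biUnion.mpr ⟨j, mem_univ j, hj⟩)
    have step : ∀ i : Fin n,
        (∀ p q : Fin n, p ≠ q →
          Disjoint (Function.update A i (insert a (A i)) p)
            (Function.update A i (insert a (A i)) q)) ∧
        Finset.univ.biUnion (Function.update A i (insert a (A i))) = insert a S := by
      intro i
      constructor
      · intro p q hpq
        by_cases hp : p = i
        · subst hp
          have hq : q ≠ p := fun h => hpq h.symm
          rw [Function.update_self, Function.update_of_ne hq]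
          exact Finset.disjoint_insert_left.mpr ⟨hnotin q, hdisj p q (fun h => hq h.symm)⟩
        · rw [Function.update_of_ne hp]
          by_cases hq : q = i
          · subst hq
            rw [Function.update_self]
            exact Finset.disjoint_insert_right.mpr ⟨hnotin p, hdisj p q hpq⟩
          · rw [Function.update_of_ne hq]
            exact hdisj p q hpq
      · rw [← hcov]
        ext x
        simp only [mem_biUnion, mem_univ, true_and, mem_insert]
        constructor
        · rintro ⟨k, hk⟩
          by_cases hk' : k = i
          · rw [hk', Function.update_self] at hk
            rcases mem_insert.mp hk with h | h
            · exact Or.inl h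
            · exact Or.inr ⟨i, h⟩
          · rw [Function.update_of_ne hk'] at hk
            exact Or.inr ⟨k, hk⟩
        · rintro (rfl | ⟨k, hk⟩)
          · exact ⟨i, by rw [Function.update_self]; exact mem_insert_self _ _⟩
          · by_cases hk' : k = i
            · exact ⟨i, by rw [Function.update_self]; exact mem_insert_of_mem (hk' ▸ hk)⟩
            · exact ⟨k, by rw [Function.update_of_ne hk']; exact hk⟩
    rcases hobj a with hg | hc
    · -- a is an objective good: give it to a poorest agent
      obtain ⟨i, -, hmin⟩ := Finset.exists_min_image Finset.univ
        (fun k => ∑ o ∈ A k, v k o) univ_nonempty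
      set A' := Function.update A i (insert a (A i)) with hA'def
      have hA'i : A' i = insert a (A i) := Function.update_self _ _ _
      have hA'ne : ∀ j, j ≠ i → A' j = A j := fun j h => Function.update_of_ne h _ _
      have hsumi : ∑ o ∈ A' i, v i o = v i a + ∑ o ∈ A i, v i o := by
        rw [hA'i, sum_insert (hnotin i)]
      refine ⟨A', (step i).1, (step i).2, ?_⟩
      intro p q hpq
      by_cases hq : i = q
      · subst hq
        by_cases hp : i = p
        · subst hp; exact absurd hpq (lt_irrefl _)
        · replace hp : p ≠ i := fun h => hp h.symm
          left
          refine ⟨a, by rw [hA'i]; exact mem_insert_self _ _, hg i, ?_⟩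
          rw [hA'i, erase_insert (hnotin i), hA'ne p hp]
          exact hmin p (mem_univ p)
      · have hq' := hA'ne q (fun h => hq h.symm)
        by_cases hp : i = p
        · subst hp
          rw [hq'] at hpq ⊢
          have hlt : ∑ o ∈ A i, v i o < ∑ o ∈ A q, v q o := by
            have := hg i; omega
          rcases heq i q hlt with ⟨g, hgq, hg0, hle⟩ | ⟨c, hci, hc0, hle⟩
          · left
            refine ⟨g, hgq, hg0, hle.trans ?_⟩
            have := hg i; omega
          · right
            have hca : a ≠ c := fun h => hnotin i (h ▸ hci)
            refine ⟨c, by rw [hA'i]; exact mem_insert_of_mem hci, hc0, ?_⟩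
            have hnae : a ∉ (A i).erase c := fun h => hnotin i (mem_of_mem_erase h)
            rw [hA'i, erase_insert_of_ne hca, sum_insert hnae]
            have := hg i; omega
        · rw [hq', hA'ne p (fun h => hp h.symm)] at hpq ⊢
          exact heq p q hpq
    · -- a is an objective chore: give it to a richest agent
      obtain ⟨i, -, hmax⟩ := Finset.exists_max_image Finset.univ
        (fun k => ∑ o ∈ A k, v k o) univ_nonempty
      set A' := Function.update A i (insert a (A i)) with hA'def
      have hA'i : A' i = insert a (A i) := Function.update_self _ _ _
      have hA'ne : ∀ j, j ≠ i → A' j = A j := fun j h => Function.update_of_ne h _ _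
      have hsumi : ∑ o ∈ A' i, v i o = v i a + ∑ o ∈ A i, v i o := by
        rw [hA'i, sum_insert (hnotin i)]
      refine ⟨A', (step i).1, (step i).2, ?_⟩
      intro p q hpq
      by_cases hp : i = p
      · subst hp
        by_cases hq : i = q
        · subst hq; exact absurd hpq (lt_irrefl _)
        · replace hq : q ≠ i := fun h => hq h.symm
          right
          refine ⟨a, by rw [hA'i]; exact mem_insert_self _ _, hc i, ?_⟩
          rw [hA'i, erase_insert (hnotin i), hA'ne q hq]
          exact hmax q (mem_univ q)
      · have hp' := hA'ne p (fun h => hp h.symm)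
        by_cases hq : i = q
        · subst hq
          rw [hp'] at hpq ⊢
          have hlt : ∑ o ∈ A p, v p o < ∑ o ∈ A i, v i o := by
            have := hc i; omega
          rcases heq p i hlt with ⟨g, hgi, hg0, hle⟩ | ⟨c, hcp, hc0, hle⟩
          · left
            have hag : a ≠ g := fun h => hnotin i (h ▸ hgi)
            refine ⟨g, by rw [hA'i]; exact mem_insert_of_mem hgi, hg0, ?_⟩
            have hnae : a ∉ (A i).erase g := fun h => hnotin i (mem_of_mem_erase h)
            rw [hA'i, erase_insert_of_ne hag, sum_insert hnae]
            have := hc i; omega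
          · right
            refine ⟨c, hcp, hc0, le_trans ?_ hle⟩
            have := hc i; omega
        · rw [hp', hA'ne q (fun h => hq h.symm)] at hpq ⊢
          exact heq p q hpq
end

section
/- Completion Lemma: Let A be a partial EQ1 allocation of a subset S ⊆ O of items such that every subjective item belongs to S (i.e., O^± ⊆ S). Then there exists a complete EQ1 allocation A' of all items with A_i ⊆ A'_i for every agent i. -/
open Finset

/-- A partial allocation of the subset `S` of items. -/
def isPartialAllocation {n : ℕ} {ι : Type*} [Fintype ι] [DecidableEq ι]
    (A : Fin n → Finset ι) (S : Finset ι) : Prop :=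
  (∀ i j : Fin n, i ≠ j → Disjoint (A i) (A j)) ∧
    Finset.univ.biUnion A = S

section Aux

variable {n : ℕ} {ι : Type*} [Fintype ι] [DecidableEq ι]

lemma step_lemma (hn : 0 < n) (v : Fin n → ι → ℤ) (S : Finset ι) (A : Fin n → Finset ι)
    (hpart : isPartialAllocation A S) (hEQ1 : EQ1 v A)
    (o : ι) (ho : o ∉ S)
    (hsign : (∀ i, 0 ≤ v i o) ∨ (∀ i, v i o ≤ 0)) :
    ∃ A' : Fin n → Finset ι, isPartialAllocation A' (insert o S) ∧ EQ1 v A' ∧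
      ∀ i, A i ⊆ A' i := by
  classical
  have : Nonempty (Fin n) := ⟨⟨0, hn⟩⟩
  have hoA : ∀ i, o ∉ A i := by
    intro i hi
    exact ho (hpart.2 ▸ Finset.mem_biUnion.mpr ⟨i, Finset.mem_univ i, hi⟩)
  -- choose the receiving agent
  obtain ⟨k, -, hk⟩ :
      ∃ k ∈ Finset.univ, ∀ j ∈ Finset.univ,
        (if (∀ i, 0 ≤ v i o) then (∑ x ∈ A k, v k x ≤ ∑ x ∈ A j, v j x)
         else (∑ x ∈ A j, v j x ≤ ∑ x ∈ A k, v k x)) := by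
    by_cases hg : ∀ i, 0 ≤ v i o
    · obtain ⟨k, hk1, hk2⟩ := Finset.exists_min_image Finset.univ
        (fun i => ∑ x ∈ A i, v i x) Finset.univ_nonempty
      exact ⟨k, hk1, fun j hj => by simpa [hg] using hk2 j hj⟩
    · obtain ⟨k, hk1, hk2⟩ := Finset.exists_max_image Finset.univ
        (fun i => ∑ x ∈ A i, v i x) Finset.univ_nonempty
      exact ⟨k, hk1, fun j hj => by simpa [hg] using hk2 j hj⟩
  set A' : Fin n → Finset ι := fun i => if i = k then insert o (A i) else A i with hA'
  have hA'k : A' k = insert o (A k) := by simp [hA']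
  have hA'ne : ∀ i, i ≠ k → A' i = A i := fun i hi => by simp [hA', hi]
  have hsumk : ∑ x ∈ A' k, v k x = v k o + ∑ x ∈ A k, v k x := by
    rw [hA'k, Finset.sum_insert (hoA k)]
  have hsumne : ∀ i, i ≠ k → ∑ x ∈ A' i, v i x = ∑ x ∈ A i, v i x := by
    intro i hi; rw [hA'ne i hi]
  have hsub' : ∀ i, A i ⊆ A' i := by
    intro i
    by_cases hi : i = k
    · subst hi; rw [hA'k]; exact Finset.subset_insert _ _
    · rw [hA'ne i hi]
  refine ⟨A', ⟨?_, ?_⟩, ?_, hsub'⟩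
  · -- disjointness
    intro i j hij
    have hdij := hpart.1 i j hij
    by_cases hi : i = k
    · subst hi
      rw [hA'k, hA'ne j (Ne.symm hij)]
      exact Finset.disjoint_insert_left.mpr ⟨hoA j, hdij⟩
    · by_cases hj : j = k
      · subst hj
        rw [hA'k, hA'ne i hi]
        exact Finset.disjoint_insert_right.mpr ⟨hoA i, hdij⟩
      · rw [hA'ne i hi, hA'ne j hj]; exact hdij
  · -- coverage
    ext x
    simp only [Finset.mem_biUnion, Finset.mem_univ, true_and, Finset.mem_insert]
    constructor
    · rintro ⟨i, hi⟩
      by_cases hik : i = k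
      · subst hik
        rw [hA'k, Finset.mem_insert] at hi
        rcases hi with h | h
        · exact Or.inl h
        · exact Or.inr (hpart.2 ▸ Finset.mem_biUnion.mpr ⟨i, Finset.mem_univ i, h⟩)
      · rw [hA'ne i hik] at hi
        exact Or.inr (hpart.2 ▸ Finset.mem_biUnion.mpr ⟨i, Finset.mem_univ i, hi⟩)
    · rintro (rfl | hx)
      · exact ⟨k, by rw [hA'k]; exact Finset.mem_insert_self _ _⟩
      · rw [← hpart.2] at hx
        obtain ⟨i, -, hi⟩ := Finset.mem_biUnion.mp hx
        exact ⟨i, hsub' i hi⟩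
  · -- EQ1
    intro i j hij
    by_cases hg : ∀ i, 0 ≤ v i o
    · -- good case: k is the argmin
      have hkmin : ∀ j, ∑ x ∈ A k, v k x ≤ ∑ x ∈ A j, v j x := by
        intro j; simpa [hg] using hk j (Finset.mem_univ j)
      by_cases hjk : j = k
      · subst hjk
        left
        refine ⟨o, by rw [hA'k]; exact Finset.mem_insert_self _ _, hg j, ?_⟩
        rw [hA'k, Finset.erase_insert (hoA j)]
        have hik : i ≠ j := by rintro rfl; exact lt_irrefl _ hij
        rw [hsumne i hik]
        exact hkmin i
      · rw [hsumne j hjk] at hij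
        by_cases hik : i = k
        · subst hik
          have hlt : ∑ x ∈ A i, v i x < ∑ x ∈ A j, v j x :=
            lt_of_le_of_lt (by rw [hsumk]; linarith [hg i]) hij
          rcases hEQ1 i j hlt with ⟨g, hgmem, hg0, hsum⟩ | ⟨c, hcmem, hc0, hsum⟩
          · left
            refine ⟨g, by rw [hA'ne j hjk]; exact hgmem, hg0, ?_⟩
            rw [hA'ne j hjk, hsumk]
            linarith [hg i]
          · right
            refine ⟨c, hsub' i hcmem, hc0, ?_⟩
            have hco : c ≠ o := fun h => hoA i (h ▸ hcmem)
            rw [hsumne j hjk, hA'k, Finset.erase_insert_of_ne (Ne.symm hco),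
              Finset.sum_insert (fun h => hoA i (Finset.mem_of_mem_erase h))]
            linarith [hg i]
        · rw [hsumne i hik] at hij
          rcases hEQ1 i j hij with ⟨g, hgmem, hg0, hsum⟩ | ⟨c, hcmem, hc0, hsum⟩
          · left
            exact ⟨g, by rw [hA'ne j hjk]; exact hgmem, hg0, by
              rw [hA'ne j hjk, hsumne i hik]; exact hsum⟩
          · right
            exact ⟨c, by rw [hA'ne i hik]; exact hcmem, hc0, by
              rw [hA'ne i hik, hsumne j hjk]; exact hsum⟩
    · -- chore case: k is the argmax
      have hc : ∀ i, v i o ≤ 0 := hsign.resolve_left hg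
      have hkmax : ∀ j, ∑ x ∈ A j, v j x ≤ ∑ x ∈ A k, v k x := by
        intro j; simpa [hg] using hk j (Finset.mem_univ j)
      by_cases hik : i = k
      · subst hik
        right
        refine ⟨o, by rw [hA'k]; exact Finset.mem_insert_self _ _, hc i, ?_⟩
        rw [hA'k, Finset.erase_insert (hoA i)]
        have hjk : j ≠ i := by rintro rfl; exact lt_irrefl _ hij
        rw [hsumne j hjk]
        exact hkmax j
      · rw [hsumne i hik] at hij
        by_cases hjk : j = k
        · subst hjk
          have hlt : ∑ x ∈ A i, v i x < ∑ x ∈ A j, v j x :=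
            lt_of_lt_of_le hij (by rw [hsumk]; linarith [hc j])
          rcases hEQ1 i j hlt with ⟨g, hgmem, hg0, hsum⟩ | ⟨c, hcmem, hc0, hsum⟩
          · left
            refine ⟨g, hsub' j hgmem, hg0, ?_⟩
            have hgo : g ≠ o := fun h => hoA j (h ▸ hgmem)
            rw [hsumne i hik, hA'k, Finset.erase_insert_of_ne (Ne.symm hgo),
              Finset.sum_insert (fun h => hoA j (Finset.mem_of_mem_erase h))]
            linarith [hc j]
          · right
            refine ⟨c, by rw [hA'ne i hik]; exact hcmem, hc0, ?_⟩
            rw [hA'ne i hik, hsumk]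
            linarith [hc j]
        · rw [hsumne j hjk] at hij
          rcases hEQ1 i j hij with ⟨g, hgmem, hg0, hsum⟩ | ⟨c, hcmem, hc0, hsum⟩
          · left
            exact ⟨g, by rw [hA'ne j hjk]; exact hgmem, hg0, by
              rw [hA'ne j hjk, hsumne i hik]; exact hsum⟩
          · right
            exact ⟨c, by rw [hA'ne i hik]; exact hcmem, hc0, by
              rw [hA'ne i hik, hsumne j hjk]; exact hsum⟩

lemma complete_aux (hn : 0 < n) (v : Fin n → ι → ℤ) :
    ∀ (m : ℕ) (S : Finset ι) (A : Fin n → Finset ι),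
      (Finset.univ \ S).card ≤ m →
      isPartialAllocation A S → EQ1 v A →
      (∀ o : ι, (∃ i, 0 < v i o) → (∃ j, v j o < 0) → o ∈ S) →
      ∃ A' : Fin n → Finset ι, isAllocation A' ∧ EQ1 v A' ∧ ∀ i, A i ⊆ A' i := by
  intro m
  induction m with
  | zero =>
    intro S A hcard hpart hEQ1 _
    have hS : S = Finset.univ := by
      have : Finset.univ \ S = ∅ := Finset.card_eq_zero.mp (Nat.le_zero.mp hcard)
      have := Finset.sdiff_eq_empty_iff_subset.mp this
      exact Finset.eq_univ_iff_forall.mpr fun x => this (Finset.mem_univ x)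
    exact ⟨A, ⟨hpart.1, hS ▸ hpart.2⟩, hEQ1, fun i => Finset.Subset.refl _⟩
  | succ m ih =>
    intro S A hcard hpart hEQ1 hsub
    by_cases hS : S = Finset.univ
    · exact ⟨A, ⟨hpart.1, hS ▸ hpart.2⟩, hEQ1, fun i => Finset.Subset.refl _⟩
    · obtain ⟨o, ho⟩ : ∃ o, o ∉ S := by
        by_contra h
        push_neg at h
        exact hS (Finset.eq_univ_iff_forall.mpr h)
      have hsign : (∀ i, 0 ≤ v i o) ∨ (∀ i, v i o ≤ 0) := by
        by_contra h
        push_neg at h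
        obtain ⟨⟨i, hi⟩, ⟨j, hj⟩⟩ := h
        exact ho (hsub o ⟨j, hj⟩ ⟨i, hi⟩)
      obtain ⟨A', hpart', hEQ1', hext⟩ := step_lemma hn v S A hpart hEQ1 o ho hsign
      have hcard' : (Finset.univ \ insert o S).card ≤ m := by
        have h1 : Finset.univ \ insert o S = (Finset.univ \ S).erase o := by
          ext x; simp [Finset.mem_sdiff, and_comm, not_or]
        have h2 : o ∈ Finset.univ \ S := Finset.mem_sdiff.mpr ⟨Finset.mem_univ o, ho⟩
        rw [h1, Finset.card_erase_of_mem h2]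
        omega
      obtain ⟨A'', hA''1, hA''2, hA''3⟩ := ih (insert o S) A' hcard' hpart' hEQ1'
        (fun o' h1 h2 => Finset.mem_insert_of_mem (hsub o' h1 h2))
      exact ⟨A'', hA''1, hA''2, fun i => (hext i).trans (hA''3 i)⟩

end Aux

/-- Completion Lemma: any partial EQ1 allocation that covers all subjective items
can be completed to a full EQ1 allocation. -/
theorem stmt3 {n : ℕ} (hn : 0 < n) {ι : Type*} [Fintype ι] [DecidableEq ι]
    (v : Fin n → ι → ℤ) (S : Finset ι) (A : Fin n → Finset ι)
    (hpart : isPartialAllocation A S)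
    (hEQ1 : EQ1 v A)
    (hsub : ∀ o : ι, (∃ i, 0 < v i o) → (∃ j, v j o < 0) → o ∈ S) :
    ∃ A' : Fin n → Finset ι, isAllocation A' ∧ EQ1 v A' ∧ ∀ i, A i ⊆ A' i := by
  exact complete_aux hn v (Finset.univ \ S).card S A le_rfl hpart hEQ1 hsub
end

section
/- In every fair division instance with v_i(o) ∈ {-1, 1} for all agents i and items o that is normalized (v_i(O) = K for every agent i, for some constant K), there exists a partial EQ1 allocation that allocates exactly the set O^± of subjective items. -/
open Finset

set_option maxHeartbeats 1000000 in
/-- Key combinatorial lemma: if every item in `S` is mixed (has a liker and a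
hater), and every "type class" of `S` has size at most `(|S|+1)/2`, then there
is an allocation of `S` in which every bundle has value `0` or `1` to its
owner. -/
theorem key_lemma {n : ℕ} {ι : Type*} [Fintype ι] [DecidableEq ι]
    (v : Fin n → ι → ℤ) (hbi : ∀ i o, v i o = -1 ∨ v i o = 1) :
    ∀ m : ℕ, ∀ S : Finset ι, S.card = m →
    (∀ o ∈ S, (∃ i, v i o = 1) ∧ (∃ i, v i o = -1)) →
    (∀ o ∈ S, 2 * (S.filter (fun o' => ∀ i, v i o' = v i o)).card ≤ S.card + 1) →
    ∃ A : Fin n → Finset ι,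
      (∀ i j : Fin n, i ≠ j → Disjoint (A i) (A j)) ∧
      Finset.univ.biUnion A = S ∧
      ∀ i, 0 ≤ ∑ o ∈ A i, v i o ∧ ∑ o ∈ A i, v i o ≤ 1 := by
  intro m
  induction m using Nat.strong_induction_on with
  | _ m IH =>
    intro S hcard hmix hinv
    match m, hcard with
    | 0, hcard =>
      have hS : S = ∅ := Finset.card_eq_zero.mp hcard
      subst hS
      exact ⟨fun _ => ∅, fun i j _ => by simp, by ext x; simp, fun i => by simp⟩
    | 1, hcard =>
      rw [Finset.card_eq_one] at hcard
      obtain ⟨o, rfl⟩ := hcard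
      obtain ⟨⟨i, hi⟩, -⟩ := hmix o (mem_singleton_self o)
      refine ⟨fun j => if j = i then {o} else ∅, ?_, ?_, ?_⟩
      · intro j k hjk
        by_cases hj : j = i <;> by_cases hk : k = i
        · exact absurd (hj.trans hk.symm) hjk
        · simp [hj, hk]
        · simp [hj, hk]
        · simp [hj, hk]
      · ext x
        simp only [mem_biUnion, mem_univ, true_and]
        constructor
        · rintro ⟨j, hj⟩
          by_cases h : j = i
          · rw [if_pos h] at hj; exact hj
          · rw [if_neg h] at hj; exact absurd hj (Finset.notMem_empty x)
        · intro hx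
          exact ⟨i, by rw [if_pos rfl]; exact hx⟩
      · intro j
        by_cases h : j = i <;> simp [h, hi]
    | (m + 2), hcard =>
      -- pick o in a largest class
      have hSne : S.Nonempty := by
        rw [← Finset.card_pos, hcard]; omega
      obtain ⟨o, hoS, hmax⟩ := Finset.exists_max_image S
        (fun x => (S.filter (fun o' => ∀ i, v i o' = v i x)).card) hSne
      -- there is an item outside the class of o
      have hne : (S \ S.filter (fun o' => ∀ i, v i o' = v i o)).Nonempty := by
        rw [Finset.sdiff_nonempty]
        intro hsub
        have hSeq : S.filter (fun o' => ∀ i, v i o' = v i o) = S :=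
          Finset.Subset.antisymm (filter_subset _ _) hsub
        have h2 := hinv o hoS
        rw [hSeq, hcard] at h2
        omega
      obtain ⟨o', ho'⟩ := hne
      have ho'S : o' ∈ S := (Finset.mem_sdiff.mp ho').1
      have ho'C : o' ∉ S.filter (fun o' => ∀ i, v i o' = v i o) :=
        (Finset.mem_sdiff.mp ho').2
      have ho'o : ¬ (∀ i, v i o' = v i o) := fun h =>
        ho'C (Finset.mem_filter.mpr ⟨ho'S, h⟩)
      push_neg at ho'o
      obtain ⟨i₀, hi₀⟩ := ho'o
      have hcancel : v i₀ o + v i₀ o' = 0 := by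
        rcases hbi i₀ o with h1 | h1 <;> rcases hbi i₀ o' with h2 | h2
        · exact absurd (h2.trans h1.symm) hi₀
        · rw [h1, h2]; ring
        · rw [h1, h2]; ring
        · exact absurd (h2.trans h1.symm) hi₀
      have hoo' : o ≠ o' := by
        rintro rfl; exact hi₀ rfl
      -- the smaller set
      set S' : Finset ι := (S.erase o).erase o' with hS'
      have ho'S'mem : o' ∈ S.erase o := Finset.mem_erase.mpr ⟨fun h => hoo' h.symm, ho'S⟩
      have hS'card : S'.card = m := by
        rw [hS', Finset.card_erase_of_mem ho'S'mem, Finset.card_erase_of_mem hoS, hcard]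
        omega
      have hS'sub : S' ⊆ S := (Finset.erase_subset _ _).trans (Finset.erase_subset _ _)
      have hoS' : o ∉ S' := fun h => (Finset.mem_erase.mp (Finset.mem_of_mem_erase h)).1 rfl
      have ho'S' : o' ∉ S' := fun h => (Finset.mem_erase.mp h).1 rfl
      have hins : insert o (insert o' S') = S := by
        rw [hS', Finset.insert_erase ho'S'mem, Finset.insert_erase hoS]
      -- class sizes in S'
      have hinv' : ∀ o'' ∈ S',
          2 * (S'.filter (fun x => ∀ i, v i x = v i o'')).card ≤ S'.card + 1 := by
        intro o'' ho''
        have ho''S : o'' ∈ S := hS'sub ho''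
        have hclassS' : S'.filter (fun x => ∀ i, v i x = v i o'') =
            ((S.filter (fun x => ∀ i, v i x = v i o'')).erase o).erase o' := by
          rw [hS', Finset.filter_erase, Finset.filter_erase]
        rw [hclassS', hS'card]
        by_cases hoD : o ∈ S.filter (fun x => ∀ i, v i x = v i o'')
        · -- class of o'' equals class of o
          have hvoo'' : ∀ i, v i o = v i o'' := (Finset.mem_filter.mp hoD).2
          have ho'D : o' ∉ S.filter (fun x => ∀ i, v i x = v i o'') := by
            intro h
            exact hi₀ (((Finset.mem_filter.mp h).2 i₀).trans (hvoo'' i₀).symm)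
          have ho'D2 : o' ∉ (S.filter (fun x => ∀ i, v i x = v i o'')).erase o :=
            fun h => ho'D (Finset.mem_of_mem_erase h)
          rw [Finset.erase_eq_of_notMem ho'D2, Finset.card_erase_of_mem hoD]
          have hDeq : S.filter (fun x => ∀ i, v i x = v i o'') =
              S.filter (fun x => ∀ i, v i x = v i o) := by
            apply Finset.filter_congr
            intro x _
            constructor
            · intro h i; rw [h i, ← hvoo'' i]
            · intro h i; rw [h i, hvoo'' i]
          have h1 := hinv o hoS
          rw [hcard] at h1
          rw [hDeq]
          omega
        · by_cases ho'D : o' ∈ S.filter (fun x => ∀ i, v i x = v i o'')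
          · have honotmem : o ∉ S.filter (fun x => ∀ i, v i x = v i o'') := hoD
            rw [Finset.erase_eq_of_notMem honotmem, Finset.card_erase_of_mem ho'D]
            have hvo' : ∀ i, v i o' = v i o'' := (Finset.mem_filter.mp ho'D).2
            have hDeq : S.filter (fun x => ∀ i, v i x = v i o'') =
                S.filter (fun x => ∀ i, v i x = v i o') := by
              apply Finset.filter_congr
              intro x _
              constructor
              · intro h i; rw [h i, ← hvo' i]
              · intro h i; rw [h i, hvo' i]
            have h1 := hinv o' ho'S
            rw [hcard] at h1
            rw [hDeq]
            omega
          · -- class of o'' untouched; use disjointness of the three classes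
            rw [Finset.erase_eq_of_notMem
                (fun h => ho'D (Finset.mem_of_mem_erase h)),
              Finset.erase_eq_of_notMem hoD]
            have hmaxD := hmax o'' ho''S
            -- pairwise disjointness of classes
            have hDC : Disjoint (S.filter (fun x => ∀ i, v i x = v i o''))
                (S.filter (fun x => ∀ i, v i x = v i o)) := by
              rw [Finset.disjoint_left]
              intro x hxD hxC
              apply hoD
              have h1 : ∀ i, v i x = v i o'' := (Finset.mem_filter.mp hxD).2
              have h2 : ∀ i, v i x = v i o := (Finset.mem_filter.mp hxC).2
              exact Finset.mem_filter.mpr ⟨hoS, fun i => (h2 i).symm.trans (h1 i)⟩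
            have hDC' : Disjoint (S.filter (fun x => ∀ i, v i x = v i o''))
                (S.filter (fun x => ∀ i, v i x = v i o')) := by
              rw [Finset.disjoint_left]
              intro x hxD hxC'
              apply ho'D
              have h1 : ∀ i, v i x = v i o'' := (Finset.mem_filter.mp hxD).2
              have h2 : ∀ i, v i x = v i o' := (Finset.mem_filter.mp hxC').2
              exact Finset.mem_filter.mpr ⟨ho'S, fun i => (h2 i).symm.trans (h1 i)⟩
            have hCC' : Disjoint (S.filter (fun x => ∀ i, v i x = v i o))
                (S.filter (fun x => ∀ i, v i x = v i o')) := by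
              rw [Finset.disjoint_left]
              intro x hxC hxC'
              apply hi₀
              have h1 : ∀ i, v i x = v i o := (Finset.mem_filter.mp hxC).2
              have h2 : ∀ i, v i x = v i o' := (Finset.mem_filter.mp hxC').2
              rw [← h2 i₀, h1 i₀]
            have hunion : (S.filter (fun x => ∀ i, v i x = v i o'') ∪
                S.filter (fun x => ∀ i, v i x = v i o)) ∪
                S.filter (fun x => ∀ i, v i x = v i o') ⊆ S := by
              intro x hx
              rcases Finset.mem_union.mp hx with hx | hx
              · rcases Finset.mem_union.mp hx with hx | hx
                · exact (filter_subset _ _) hx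
                · exact (filter_subset _ _) hx
              · exact (filter_subset _ _) hx
            have hcards : (S.filter (fun x => ∀ i, v i x = v i o'')).card +
                (S.filter (fun x => ∀ i, v i x = v i o)).card +
                (S.filter (fun x => ∀ i, v i x = v i o')).card ≤ S.card := by
              have h1 : ((S.filter (fun x => ∀ i, v i x = v i o'') ∪
                  S.filter (fun x => ∀ i, v i x = v i o)) ∪
                  S.filter (fun x => ∀ i, v i x = v i o')).card =
                  (S.filter (fun x => ∀ i, v i x = v i o'')).card +
                  (S.filter (fun x => ∀ i, v i x = v i o)).card +
                  (S.filter (fun x => ∀ i, v i x = v i o')).card := by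
                rw [Finset.card_union_of_disjoint, Finset.card_union_of_disjoint hDC]
                rw [Finset.disjoint_union_left]
                exact ⟨hDC', hCC'⟩
              rw [← h1]
              exact Finset.card_le_card hunion
            have hC'pos : 0 < (S.filter (fun x => ∀ i, v i x = v i o')).card :=
              Finset.card_pos.mpr ⟨o', Finset.mem_filter.mpr ⟨ho'S, fun i => rfl⟩⟩
            rw [hcard] at hcards
            beta_reduce at hmaxD
            omega
      -- apply IH
      obtain ⟨A', hdisj', hbu', hsum'⟩ := IH m (by omega) S' hS'card
        (fun x hx => hmix x (hS'sub hx)) hinv'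
      have hA'sub : ∀ j, A' j ⊆ S' := by
        intro j x hx
        rw [← hbu']
        exact Finset.mem_biUnion.mpr ⟨j, Finset.mem_univ j, hx⟩
      refine ⟨Function.update A' i₀ (insert o (insert o' (A' i₀))), ?_, ?_, ?_⟩
      · intro j k hjk
        by_cases hj : j = i₀ <;> by_cases hk : k = i₀
        · exact absurd (hj.trans hk.symm) hjk
        · subst hj
          simp only [Function.update_self, Function.update_of_ne hk]
          rw [Finset.disjoint_left]
          intro x hx hxk
          have hxS' : x ∈ S' := hA'sub k hxk
          rcases Finset.mem_insert.mp hx with rfl | hx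
          · exact hoS' hxS'
          rcases Finset.mem_insert.mp hx with rfl | hx
          · exact ho'S' hxS'
          · exact (Finset.disjoint_left.mp (hdisj' j k hjk) hx) hxk
        · subst hk
          simp only [Function.update_self, Function.update_of_ne hj]
          rw [Finset.disjoint_right]
          intro x hx hxj
          have hxS' : x ∈ S' := hA'sub j hxj
          rcases Finset.mem_insert.mp hx with rfl | hx
          · exact hoS' hxS'
          rcases Finset.mem_insert.mp hx with rfl | hx
          · exact ho'S' hxS'
          · exact (Finset.disjoint_left.mp (hdisj' j k hjk) hxj) hx
        · simp only [Function.update_of_ne hj, Function.update_of_ne hk]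
          exact hdisj' j k hjk
      · rw [← hins]
        ext x
        simp only [mem_biUnion, mem_univ, true_and]
        constructor
        · rintro ⟨j, hj⟩
          by_cases hjne : j = i₀
          · subst hjne
            rw [Function.update_self] at hj
            rcases Finset.mem_insert.mp hj with rfl | hj
            · exact Finset.mem_insert_self _ _
            rcases Finset.mem_insert.mp hj with rfl | hj
            · exact Finset.mem_insert.mpr (Or.inr (Finset.mem_insert_self _ _))
            · exact Finset.mem_insert.mpr (Or.inr (Finset.mem_insert.mpr
                (Or.inr (hA'sub j hj))))
          · rw [Function.update_of_ne hjne] at hj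
            exact Finset.mem_insert.mpr (Or.inr (Finset.mem_insert.mpr
              (Or.inr (hA'sub j hj))))
        · intro hx
          rcases Finset.mem_insert.mp hx with rfl | hx
          · exact ⟨i₀, by rw [Function.update_self]; exact Finset.mem_insert_self _ _⟩
          rcases Finset.mem_insert.mp hx with rfl | hx
          · exact ⟨i₀, by
              rw [Function.update_self]
              exact Finset.mem_insert.mpr (Or.inr (Finset.mem_insert_self _ _))⟩
          · obtain ⟨j, -, hj⟩ := Finset.mem_biUnion.mp (hbu' ▸ hx)
            refine ⟨j, ?_⟩
            by_cases hjne : j = i₀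
            · subst hjne
              rw [Function.update_self]
              exact Finset.mem_insert.mpr (Or.inr (Finset.mem_insert.mpr (Or.inr hj)))
            · rwa [Function.update_of_ne hjne]
      · intro j
        by_cases hjne : j = i₀
        · subst hjne
          rw [Function.update_self]
          have ho'notin : o' ∉ A' j := fun h => ho'S' (hA'sub j h)
          have honotin : o ∉ insert o' (A' j) := by
            intro h
            rcases Finset.mem_insert.mp h with h | h
            · exact hoo' h
            · exact hoS' (hA'sub j h)
          rw [Finset.sum_insert honotin, Finset.sum_insert ho'notin, ← add_assoc,
            hcancel, zero_add]
          exact hsum' j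
        · rw [Function.update_of_ne hjne]
          exact hsum' j

set_option maxHeartbeats 1000000 in
/-- For normalized {-1,1} valuations, there is a partial EQ1 allocation that
allocates exactly the set of subjective items. -/
theorem stmt5 {n : ℕ} {ι : Type*} [Fintype ι] [DecidableEq ι]
    (v : Fin n → ι → ℤ)
    (hbi : ∀ i o, v i o = -1 ∨ v i o = 1)
    (K : ℤ) (hnorm : ∀ i, ∑ o, v i o = K) :
    ∃ A : Fin n → Finset ι,
      isPartialAllocation A
        (Finset.univ.filter (fun o => (∃ i, 0 < v i o) ∧ (∃ i, v i o < 0))) ∧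
      EQ1 v A := by
  classical
  set S : Finset ι :=
    Finset.univ.filter (fun o => (∃ i, 0 < v i o) ∧ (∃ i, v i o < 0)) with hSdef
  -- every item in S is mixed
  have hmix : ∀ o ∈ S, (∃ i, v i o = 1) ∧ (∃ i, v i o = -1) := by
    intro o ho
    rw [hSdef, Finset.mem_filter] at ho
    obtain ⟨-, ⟨p, hp⟩, ⟨q, hq⟩⟩ := ho
    refine ⟨⟨p, ?_⟩, ⟨q, ?_⟩⟩
    · rcases hbi p o with h | h <;> omega
    · rcases hbi q o with h | h <;> omega
  -- all agents value S equally
  have hrow : ∀ p q : Fin n, ∑ o ∈ S, v p o = ∑ o ∈ S, v q o := by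
    intro p q
    have hout : ∀ o ∈ Finset.univ \ S, v p o = v q o := by
      intro o ho
      rw [Finset.mem_sdiff, hSdef, Finset.mem_filter] at ho
      have hno : ¬((∃ i, 0 < v i o) ∧ (∃ i, v i o < 0)) := fun h =>
        ho.2 ⟨Finset.mem_univ o, h⟩
      rcases hbi p o with h1 | h1 <;> rcases hbi q o with h2 | h2
      · rw [h1, h2]
      · exact absurd ⟨⟨q, by omega⟩, ⟨p, by omega⟩⟩ hno
      · exact absurd ⟨⟨p, by omega⟩, ⟨q, by omega⟩⟩ hno
      · rw [h1, h2]
    have hsplit : ∀ r : Fin n, ∑ o ∈ S, v r o = K - ∑ o ∈ Finset.univ \ S, v r o := by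
      intro r
      have h : ∑ o ∈ Finset.univ \ S, v r o + ∑ o ∈ S, v r o = K := by
        rw [← hnorm r, Finset.sum_sdiff (Finset.subset_univ S)]
      omega
    rw [hsplit p, hsplit q, Finset.sum_congr rfl hout]
  -- class size bound
  have hinv : ∀ o ∈ S,
      2 * (S.filter (fun o' => ∀ i, v i o' = v i o)).card ≤ S.card + 1 := by
    intro o ho
    obtain ⟨⟨p, hp⟩, ⟨q, hq⟩⟩ := hmix o ho
    have hCsub : S.filter (fun o' => ∀ i, v i o' = v i o) ⊆ S := filter_subset _ _
    have hzero : ∑ o' ∈ S, (v p o' - v q o') = 0 := by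
      rw [Finset.sum_sub_distrib, hrow p q, sub_self]
    have hsplit : ∑ o' ∈ S, (v p o' - v q o')
        = ∑ o' ∈ S \ S.filter (fun o' => ∀ i, v i o' = v i o), (v p o' - v q o')
          + ∑ o' ∈ S.filter (fun o' => ∀ i, v i o' = v i o), (v p o' - v q o') := by
      rw [Finset.sum_sdiff hCsub]
    have hCsum : ∑ o' ∈ S.filter (fun o' => ∀ i, v i o' = v i o), (v p o' - v q o')
        = 2 * (S.filter (fun o' => ∀ i, v i o' = v i o)).card := by
      have hconst : ∀ o' ∈ S.filter (fun o' => ∀ i, v i o' = v i o),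
          v p o' - v q o' = 2 := by
        intro o' ho'
        have h := (Finset.mem_filter.mp ho').2
        rw [h p, h q, hp, hq]
        norm_num
      rw [Finset.sum_congr rfl hconst, Finset.sum_const, nsmul_eq_mul, mul_comm]
    have hrest : -2 * ((S \ S.filter (fun o' => ∀ i, v i o' = v i o)).card : ℤ)
        ≤ ∑ o' ∈ S \ S.filter (fun o' => ∀ i, v i o' = v i o), (v p o' - v q o') := by
      calc -2 * (((S \ S.filter (fun o' => ∀ i, v i o' = v i o)).card : ℤ))
          = ∑ _o' ∈ S \ S.filter (fun o' => ∀ i, v i o' = v i o), (-2 : ℤ) := by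
            rw [Finset.sum_const, nsmul_eq_mul, mul_comm]
        _ ≤ _ := by
            apply Finset.sum_le_sum
            intro x _
            rcases hbi p x with h1 | h1 <;> rcases hbi q x with h2 | h2 <;>
              rw [h1, h2] <;> norm_num
    have hle : ((S.filter (fun o' => ∀ i, v i o' = v i o)).card : ℤ)
        ≤ ((S \ S.filter (fun o' => ∀ i, v i o' = v i o)).card : ℤ) := by
      rw [hsplit, hCsum] at hzero
      linarith
    have hle' : (S.filter (fun o' => ∀ i, v i o' = v i o)).card
        ≤ (S \ S.filter (fun o' => ∀ i, v i o' = v i o)).card := by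
      exact_mod_cast hle
    have hcardsplit : (S \ S.filter (fun o' => ∀ i, v i o' = v i o)).card
        = S.card - (S.filter (fun o' => ∀ i, v i o' = v i o)).card :=
      Finset.card_sdiff_of_subset hCsub
    have hcardle : (S.filter (fun o' => ∀ i, v i o' = v i o)).card ≤ S.card :=
      Finset.card_le_card hCsub
    omega
  obtain ⟨A, hdisj, hbu, hsum⟩ := key_lemma v hbi S.card S rfl hmix hinv
  refine ⟨A, ⟨hdisj, hbu⟩, ?_⟩
  intro i j hlt
  left
  obtain ⟨hi0, hi1⟩ := hsum i
  obtain ⟨hj0, hj1⟩ := hsum j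
  have hjpos : 0 < ∑ o ∈ A j, v j o := lt_of_le_of_lt hi0 hlt
  have hex : ∃ g ∈ A j, (0 : ℤ) < v j g := by
    by_contra h
    push_neg at h
    have hle : ∑ o ∈ A j, v j o ≤ ∑ _o ∈ A j, (0 : ℤ) :=
      Finset.sum_le_sum fun x hx => h x hx
    rw [Finset.sum_const, smul_zero] at hle
    omega
  obtain ⟨g, hg, hgpos⟩ := hex
  have hg1 : v j g = 1 := by rcases hbi j g with h | h <;> omega
  refine ⟨g, hg, by omega, ?_⟩
  have herase : ∑ o ∈ (A j).erase g, v j o + v j g = ∑ o ∈ A j, v j o :=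
    Finset.sum_erase_add _ _ hg
  omega
end

section
/- Every fair division instance with v_i(o) ∈ {-1, 1} for all agents i and items o that is normalized (v_i(O) = K for every agent i, for some constant K) admits an EQX allocation. -/
set_option linter.unusedSectionVars false


open Finset

/-- Equitability up to any item. -/
def EQX {n : ℕ} {ι : Type*} [DecidableEq ι]
    (v : Fin n → ι → ℤ) (A : Fin n → Finset ι) : Prop :=
  ∀ i j : Fin n, ∑ o ∈ A i, v i o < ∑ o ∈ A j, v j o →
    (∀ g ∈ A j, 0 ≤ v j g → ∑ o ∈ (A j).erase g, v j o ≤ ∑ o ∈ A i, v i o) ∧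
    (∀ c ∈ A i, v i c ≤ 0 → ∑ o ∈ A j, v j o ≤ ∑ o ∈ (A i).erase c, v i o)

def hh (x : ℤ) : ℚ := 4 ^ x + 2 * 4 ^ (-x)
lemma zp_pos (x : ℤ) : (0:ℚ) < 4 ^ x := zpow_pos (by norm_num) x
lemma zp_mono {x y : ℤ} (hxy : x ≤ y) : (4:ℚ) ^ x ≤ 4 ^ y :=
  zpow_le_zpow_right₀ (by norm_num) hxy
lemma zp_add (x y : ℤ) : (4:ℚ) ^ (x + y) = 4 ^ x * 4 ^ y := zpow_add₀ (by norm_num) x y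
lemma e_succ (x : ℤ) : (4:ℚ)^(x+1) = 4 * 4^x := by rw [zp_add]; norm_num; ring
lemma e_pred (x : ℤ) : (4:ℚ)^(x-1) = 4^x / 4 := by
  rw [show x-1 = x + -1 by ring, zp_add]; norm_num; ring
lemma e_two (x : ℤ) : (4:ℚ)^(x+2) = 16 * 4^x := by rw [zp_add]; norm_num; ring

lemma hh_L2 {x y : ℤ} (hxy : x + 2 ≤ y) : hh (x+1) + hh (y-1) < hh x + hh y := by
  have h1 : (16:ℚ) * 4^x ≤ 4 ^ y := by rw [← e_two]; exact zp_mono hxy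
  have h2 : (16:ℚ) * 4^(-y) ≤ 4 ^ (-x) := by rw [← e_two]; exact zp_mono (by omega)
  have hp := zp_pos x; have hs := zp_pos (-y)
  have e4 : (4:ℚ) ^ (-(x+1)) = 4^(-x) / 4 := by rw [show -(x+1) = (-x) - 1 by ring, e_pred]
  have e6 : (4:ℚ) ^ (-(y-1)) = 4 * 4^(-y) := by rw [show -(y-1) = (-y) + 1 by ring, e_succ]
  unfold hh
  rw [e_succ, e4, e_pred, e6]
  linarith

lemma hh_L3 {x y : ℤ} (hxy : 2 ≤ x + y) : hh (x-1) + hh (y-1) < hh x + hh y := by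
  have h1 : (16:ℚ) * 4^(-x) ≤ 4 ^ y := by rw [← e_two]; exact zp_mono (by omega)
  have h2 : (16:ℚ) * 4^(-y) ≤ 4 ^ x := by rw [← e_two]; exact zp_mono (by omega)
  have hp := zp_pos x; have hq := zp_pos y
  have e6 : (4:ℚ) ^ (-(y-1)) = 4 * 4^(-y) := by rw [show -(y-1) = (-y) + 1 by ring, e_succ]
  have e7 : (4:ℚ) ^ (-(x-1)) = 4 * 4^(-x) := by rw [show -(x-1) = (-x) + 1 by ring, e_succ]
  unfold hh
  rw [e_pred, e_pred, e6, e7]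
  linarith

lemma hh_L4 {x y : ℤ} (hxy : x + y ≤ -1) : hh (x+1) + hh (y+1) < hh x + hh y := by
  have h1 : (4:ℚ)^x ≤ 4^(-y) / 4 := by rw [← e_pred]; exact zp_mono (by omega)
  have h2 : (4:ℚ)^y ≤ 4^(-x) / 4 := by rw [← e_pred]; exact zp_mono (by omega)
  have hr := zp_pos (-x); have hs := zp_pos (-y)
  have e4 : (4:ℚ) ^ (-(x+1)) = 4^(-x) / 4 := by rw [show -(x+1) = (-x) - 1 by ring, e_pred]
  have e5 : (4:ℚ) ^ (-(y+1)) = 4^(-y) / 4 := by rw [show -(y+1) = (-y) - 1 by ring, e_pred]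
  unfold hh
  rw [e_succ, e_succ, e4, e5]
  linarith

lemma hh_L5 : hh 0 + hh 0 < hh (-1) + hh 1 := by simp [hh]; norm_num

section
variable {n : ℕ} {ι : Type*} [Fintype ι] [DecidableEq ι]

def eqxVal (v : Fin n → ι → ℤ) (f : ι → Fin n) (i : Fin n) : ℤ :=
  ∑ o : ι, if f o = i then v i o else 0

def eqxPhi (v : Fin n → ι → ℤ) (f : ι → Fin n) : ℚ := ∑ k : Fin n, hh (eqxVal v f k)

lemma eqxVal_update (v : Fin n → ι → ℤ) (f : ι → Fin n) (o : ι) (t : Fin n) (l : Fin n) :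
    eqxVal v (Function.update f o t) l
      = eqxVal v f l + (if t = l then v l o else 0) - (if f o = l then v l o else 0) := by
  unfold eqxVal
  rw [← Finset.add_sum_erase univ _ (Finset.mem_univ o),
      ← Finset.add_sum_erase univ (fun o' => if f o' = l then v l o' else 0) (Finset.mem_univ o)]
  have he : ∑ o' ∈ univ.erase o, (if Function.update f o t o' = l then v l o' else 0)
      = ∑ o' ∈ univ.erase o, (if f o' = l then v l o' else 0) :=
    Finset.sum_congr rfl fun x hx => by rw [Function.update_of_ne (Finset.mem_erase.mp hx).1]
  rw [he, Function.update_self]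
  ring

lemma eqxPhi_sub (v : Fin n → ι → ℤ) (f g : ι → Fin n) (S : Finset (Fin n))
    (hS : ∀ k, k ∉ S → eqxVal v g k = eqxVal v f k) :
    eqxPhi v g - eqxPhi v f = ∑ k ∈ S, (hh (eqxVal v g k) - hh (eqxVal v f k)) := by
  unfold eqxPhi
  rw [← Finset.sum_sub_distrib]
  exact (Finset.sum_subset (Finset.subset_univ S)
    (fun x _ hx => by rw [hS x hx, sub_self])).symm

lemma eqxStab (v : Fin n → ι → ℤ) (f : ι → Fin n)
    (hmin : ∀ g : ι → Fin n, eqxPhi v f ≤ eqxPhi v g) (o : ι) (t : Fin n) (ht : t ≠ f o) :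
    hh (eqxVal v f (f o)) + hh (eqxVal v f t)
      ≤ hh (eqxVal v f (f o) - v (f o) o) + hh (eqxVal v f t + v t o) := by
  set f' := Function.update f o t with hf'
  have hk : eqxVal v f' (f o) = eqxVal v f (f o) - v (f o) o := by
    rw [hf', eqxVal_update, if_neg ht, if_pos rfl]; ring
  have ht' : eqxVal v f' t = eqxVal v f t + v t o := by
    rw [hf', eqxVal_update, if_pos rfl, if_neg (Ne.symm ht)]; ring
  have hother : ∀ k, k ∉ ({f o, t} : Finset (Fin n)) → eqxVal v f' k = eqxVal v f k := by
    intro k hk'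
    simp only [Finset.mem_insert, Finset.mem_singleton, not_or] at hk'
    rw [hf', eqxVal_update, if_neg (fun h => hk'.2 h.symm), if_neg (fun h => hk'.1 h.symm)]
    ring
  have hP := eqxPhi_sub v f f' {f o, t} hother
  have hpair : ∑ k ∈ ({f o, t} : Finset (Fin n)), (hh (eqxVal v f' k) - hh (eqxVal v f k))
      = (hh (eqxVal v f' (f o)) - hh (eqxVal v f (f o)))
        + (hh (eqxVal v f' t) - hh (eqxVal v f t)) := Finset.sum_pair (Ne.symm ht)
  have hm := hmin f'
  rw [hpair, hk, ht'] at hP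
  linarith

lemma eqxStabD (v : Fin n → ι → ℤ) (f : ι → Fin n)
    (hmin : ∀ g : ι → Fin n, eqxPhi v f ≤ eqxPhi v g) (o c : ι) (hoc : o ≠ c)
    (hfc : f c = f o) (ti tj : Fin n)
    (hti : ti ≠ f o) (htj : tj ≠ f o) (htij : ti ≠ tj) :
    hh (eqxVal v f (f o)) + hh (eqxVal v f ti) + hh (eqxVal v f tj)
      ≤ hh (eqxVal v f (f o) - v (f o) o - v (f o) c)
        + hh (eqxVal v f ti + v ti o) + hh (eqxVal v f tj + v tj c) := by
  set k := f o with hk_def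
  set f1 := Function.update f o ti with hf1
  set f2 := Function.update f1 c tj with hf2
  have hf1c : f1 c = k := by rw [hf1, Function.update_of_ne (Ne.symm hoc), hfc]
  have h1 : ∀ l, eqxVal v f1 l
      = eqxVal v f l + (if ti = l then v l o else 0) - (if k = l then v l o else 0) :=
    fun l => eqxVal_update v f o ti l
  have h2 : ∀ l, eqxVal v f2 l
      = eqxVal v f1 l + (if tj = l then v l c else 0) - (if k = l then v l c else 0) := by
    intro l
    have := eqxVal_update v f1 c tj l
    rwa [hf1c] at this
  have hk2 : eqxVal v f2 k = eqxVal v f k - v k o - v k c := by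
    rw [h2, h1, if_neg hti, if_pos rfl, if_neg htj, if_pos rfl]; ring
  have hti2 : eqxVal v f2 ti = eqxVal v f ti + v ti o := by
    rw [h2, h1, if_pos rfl, if_neg (Ne.symm hti), if_neg (fun h => htij h.symm),
        if_neg (Ne.symm hti)]
    ring
  have htj2 : eqxVal v f2 tj = eqxVal v f tj + v tj c := by
    rw [h2, h1, if_neg htij, if_neg (Ne.symm htj), if_pos rfl, if_neg (Ne.symm htj)]; ring
  have hother : ∀ l, l ∉ ({k, ti, tj} : Finset (Fin n)) → eqxVal v f2 l = eqxVal v f l := by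
    intro l hl
    simp only [Finset.mem_insert, Finset.mem_singleton, not_or] at hl
    rw [h2, h1, if_neg (fun h => hl.2.1 h.symm), if_neg (fun h => hl.1 h.symm),
        if_neg (fun h => hl.2.2 h.symm), if_neg (fun h => hl.1 h.symm)]
    ring
  have hP := eqxPhi_sub v f f2 {k, ti, tj} hother
  have hmemk : k ∉ ({ti, tj} : Finset (Fin n)) := by
    simp only [Finset.mem_insert, Finset.mem_singleton]
    rintro (h | h)
    exacts [hti h.symm, htj h.symm]
  have htriple : ∑ l ∈ ({k, ti, tj} : Finset (Fin n)), (hh (eqxVal v f2 l) - hh (eqxVal v f l))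
      = (hh (eqxVal v f2 k) - hh (eqxVal v f k)) + ((hh (eqxVal v f2 ti) - hh (eqxVal v f ti))
        + (hh (eqxVal v f2 tj) - hh (eqxVal v f tj))) := by
    rw [Finset.sum_insert hmemk, Finset.sum_pair htij]
  have hm := hmin f2
  rw [htriple, hk2, hti2, htj2] at hP
  linarith

end

section
set_option linter.unusedSectionVars false
variable {n : ℕ} {ι : Type*} [Fintype ι] [DecidableEq ι]

lemma eqxMain (v : Fin n → ι → ℤ) (hbi : ∀ i o, v i o = -1 ∨ v i o = 1)
    (K : ℤ) (hnorm : ∀ i, ∑ o, v i o = K)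
    (f : ι → Fin n) (hmin : ∀ g : ι → Fin n, eqxPhi v f ≤ eqxPhi v g)
    (i j : Fin n)
    (hw : (∃ g, f g = j ∧ v j g = 1) ∨ (∃ c, f c = i ∧ v i c = -1))
    (hij : eqxVal v f i + 2 ≤ eqxVal v f j) : False := by
  have hij' : i ≠ j := by intro h; rw [h] at hij; omega
  set a := eqxVal v f i with ha_def
  set b := eqxVal v f j with hb_def
  -- witness facts
  have hW1 : ∀ g, f g = j → v j g = 1 → v i g = -1 ∧ a + b ≤ 1 := by
    intro g hg hg1
    have hs := eqxStab v f hmin g i (by rw [hg]; exact hij')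
    rw [hg, hg1] at hs
    rcases hbi i g with h1 | h1
    · rw [h1] at hs
      refine ⟨h1, ?_⟩
      by_contra hc
      push_neg at hc
      have hL := hh_L3 (x := a) (y := b) (by omega)
      rw [show a + (-1 : ℤ) = a - 1 by ring] at hs
      linarith
    · rw [h1] at hs
      have hL := hh_L2 (x := a) (y := b) hij
      linarith
  have hW2 : ∀ c, f c = i → v i c = -1 → v j c = 1 ∧ 0 ≤ a + b := by
    intro c hc hc1
    have hs := eqxStab v f hmin c j (by rw [hc]; exact hij'.symm)
    rw [hc, hc1, show a - (-1 : ℤ) = a + 1 by ring] at hs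
    rcases hbi j c with h1 | h1
    · rw [h1, show b + (-1 : ℤ) = b - 1 by ring] at hs
      have hL := hh_L2 (x := a) (y := b) hij
      linarith
    · rw [h1] at hs
      refine ⟨h1, ?_⟩
      by_contra hc2
      push_neg at hc2
      have hL := hh_L4 (x := a) (y := b) (by omega)
      linarith
  -- existence of witnesses
  have hex_g : 1 ≤ b → ∃ g, f g = j ∧ v j g = 1 := by
    intro hb1
    by_contra hng
    push_neg at hng
    have : b ≤ 0 := by
      rw [hb_def]
      unfold eqxVal
      refine Finset.sum_nonpos fun o _ => ?_
      by_cases ho : f o = j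
      · rcases hbi j o with h1 | h1
        · simp [ho, h1]
        · exact absurd h1 (hng o ho)
      · simp [ho]
    omega
  have hex_c : a ≤ -1 → ∃ c, f c = i ∧ v i c = -1 := by
    intro ha1
    by_contra hng
    push_neg at hng
    have : 0 ≤ a := by
      rw [ha_def]
      unfold eqxVal
      refine Finset.sum_nonneg fun o _ => ?_
      by_cases ho : f o = i
      · rcases hbi i o with h1 | h1
        · exact absurd h1 (hng o ho)
        · simp [ho, h1]
      · simp [ho]
    omega
  -- region
  obtain ⟨hA, hB, hR0, hR1⟩ : a ≤ -1 ∧ 1 ≤ b ∧ 0 ≤ a + b ∧ a + b ≤ 1 := by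
    rcases hw with ⟨g, hg, hg1⟩ | ⟨c, hc, hc1⟩
    · have h1 := (hW1 g hg hg1).2
      have ha1 : a ≤ -1 := by omega
      obtain ⟨c, hc, hc1⟩ := hex_c ha1
      have h0 := (hW2 c hc hc1).2
      exact ⟨ha1, by omega, h0, h1⟩
    · have h0 := (hW2 c hc hc1).2
      have hb1 : 1 ≤ b := by omega
      obtain ⟨g, hg, hg1⟩ := hex_g hb1
      have h1 := (hW1 g hg hg1).2
      exact ⟨by omega, hb1, h0, h1⟩
  -- item forcing lemmas for third agents
  have hFI1 : ∀ k, k ≠ i → ∀ o, f o = k → v k o = 1 → a + 2 ≤ eqxVal v f k → v i o = -1 := by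
    intro k hki o ho h1 hx
    rcases hbi i o with h2 | h2
    · exact h2
    · exfalso
      have hs := eqxStab v f hmin o i (by rw [ho]; exact Ne.symm hki)
      rw [ho, h1, h2] at hs
      have hL := hh_L2 (x := a) (y := eqxVal v f k) hx
      linarith
  have hFI2 : ∀ k, k ≠ i → ∀ o, f o = k → v k o = -1 → eqxVal v f k + a ≤ -1 → v i o = -1 := by
    intro k hki o ho h1 hx
    rcases hbi i o with h2 | h2
    · exact h2
    · exfalso
      have hs := eqxStab v f hmin o i (by rw [ho]; exact Ne.symm hki)
      rw [ho, h1, h2, show eqxVal v f k - (-1 : ℤ) = eqxVal v f k + 1 by ring] at hs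
      have hL := hh_L4 (x := eqxVal v f k) (y := a) hx
      linarith
  have hFJ1 : ∀ k, k ≠ j → ∀ o, f o = k → v k o = 1 → 2 ≤ eqxVal v f k + b → v j o = 1 := by
    intro k hkj o ho h1 hx
    rcases hbi j o with h2 | h2
    swap
    · exact h2
    · exfalso
      have hs := eqxStab v f hmin o j (by rw [ho]; exact Ne.symm hkj)
      rw [ho, h1, h2, show b + (-1 : ℤ) = b - 1 by ring] at hs
      have hL := hh_L3 (x := eqxVal v f k) (y := b) hx
      linarith
  have hFJ2 : ∀ k, k ≠ j → ∀ o, f o = k → v k o = -1 → eqxVal v f k + 2 ≤ b → v j o = 1 := by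
    intro k hkj o ho h1 hx
    rcases hbi j o with h2 | h2
    swap
    · exact h2
    · exfalso
      have hs := eqxStab v f hmin o j (by rw [ho]; exact Ne.symm hkj)
      rw [ho, h1, h2, show eqxVal v f k - (-1 : ℤ) = eqxVal v f k + 1 by ring,
          show b + (-1 : ℤ) = b - 1 by ring] at hs
      have hL := hh_L2 (x := eqxVal v f k) (y := b) hx
      linarith
  -- D and its total
  set D : Fin n → ℤ := fun k => ∑ o : ι, if f o = k then v i o - v j o else 0 with hD_def
  have hsumD : ∑ k : Fin n, D k = 0 := by
    rw [hD_def]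
    rw [Finset.sum_comm]
    have : ∀ o : ι, (∑ k : Fin n, if f o = k then v i o - v j o else 0) = v i o - v j o := by
      intro o
      rw [Finset.sum_ite_eq univ (f o) (fun _ => v i o - v j o), if_pos (Finset.mem_univ _)]
    rw [Finset.sum_congr rfl fun o _ => this o, Finset.sum_sub_distrib, hnorm i, hnorm j,
      sub_self]
  -- generic bounds
  have hDbound : ∀ (k : Fin n) (c : ι → ℤ), (∀ o, f o = k → v i o - v j o ≤ c o) →
      D k ≤ ∑ o : ι, if f o = k then c o else 0 := by
    intro k c hc
    refine Finset.sum_le_sum fun o _ => ?_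
    by_cases ho : f o = k
    · simpa [ho] using hc o ho
    · simp [ho]
  have hsumc : ∀ (c : ℤ) (k : Fin n),
      (∑ o : ι, if f o = k then c * v k o else 0) = c * eqxVal v f k := by
    intro c k
    unfold eqxVal
    rw [Finset.mul_sum]
    exact Finset.sum_congr rfl fun o _ => by by_cases ho : f o = k <;> simp [ho]
  -- D i and D j bounds
  have hDi : D i ≤ 2 * a := by
    rw [ha_def]
    rw [← hsumc 2 i]
    refine hDbound i _ fun o ho => ?_
    rcases hbi i o with h1 | h1
    · have h2 := (hW2 o ho h1).1
      rw [h1, h2]; norm_num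
    · rcases hbi j o with h2 | h2 <;> rw [h1, h2] <;> norm_num
  have hDj : D j ≤ -2 * b := by
    rw [hb_def, ← hsumc (-2) j]
    refine hDbound j _ fun o ho => ?_
    rcases hbi j o with h1 | h1
    · rcases hbi i o with h2 | h2 <;> rw [h1, h2] <;> norm_num
    · have h2 := (hW1 o ho h1).1
      rw [h1, h2]; norm_num
  
  -- split the total sum
  have hsplit : ∑ k : Fin n, D k = D i + (D j + ∑ k ∈ (univ.erase i).erase j, D k) := by
    rw [← Finset.add_sum_erase univ D (Finset.mem_univ i),
        ← Finset.add_sum_erase _ D (Finset.mem_erase.mpr ⟨hij'.symm, Finset.mem_univ j⟩)]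
  have hmem : ∀ k, k ∈ (univ.erase i).erase j → k ≠ i ∧ k ≠ j := by
    intro k hk
    simp only [Finset.mem_erase, Finset.mem_univ, and_true] at hk
    exact ⟨hk.2, hk.1⟩
  rcases (show (a = -1 ∧ b = 1) ∨ 3 ≤ b - a by omega) with ⟨hae, hbe⟩ | hnon
  · -- EDGE case a = -1, b = 1
    have hDk : ∀ k, k ≠ i → k ≠ j → eqxVal v f k ≠ 0 → D k ≤ -2 := by
      intro k hki hkj hx0
      rcases lt_or_gt_of_ne hx0 with hx | hx
      · -- x ≤ -1 : D k ≤ 2x ≤ -2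
        have hDle : D k ≤ 2 * eqxVal v f k := by
          rw [← hsumc 2 k]
          refine hDbound k _ fun o ho => ?_
          rcases hbi k o with h1 | h1
          · have hvi := hFI2 k hki o ho h1 (by omega)
            have hvj := hFJ2 k hkj o ho h1 (by omega)
            rw [hvi, hvj, h1]; norm_num
          · rcases hbi i o with h2 | h2 <;> rcases hbi j o with h3 | h3 <;>
              rw [h1, h2, h3] <;> norm_num
        omega
      · -- x ≥ 1 : D k ≤ -2x ≤ -2
        have hDle : D k ≤ -2 * eqxVal v f k := by
          rw [← hsumc (-2) k]
          refine hDbound k _ fun o ho => ?_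
          rcases hbi k o with h1 | h1
          · rcases hbi i o with h2 | h2 <;> rcases hbi j o with h3 | h3 <;>
              rw [h1, h2, h3] <;> norm_num
          · have hvi := hFI1 k hki o ho h1 (by omega)
            have hvj := hFJ1 k hkj o ho h1 (by omega)
            rw [hvi, hvj, h1]; norm_num
        omega
    -- find a problem agent
    obtain ⟨k, hkS, hDk1⟩ : ∃ k ∈ (univ.erase i).erase j, 1 ≤ D k := by
      by_contra hcon
      push_neg at hcon
      have hle : ∑ k ∈ (univ.erase i).erase j, D k ≤ 0 :=
        Finset.sum_nonpos fun k hk => by have := hcon k hk; omega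
      omega
    obtain ⟨hki, hkj⟩ := hmem k hkS
    have hx0 : eqxVal v f k = 0 := by
      by_contra hx0
      have := hDk k hki hkj hx0
      omega
    -- find the positive item o
    obtain ⟨o, ho, hko, hio, hjo⟩ : ∃ o, f o = k ∧ v k o = 1 ∧ v i o = 1 ∧ v j o = -1 := by
      by_contra hcon
      push_neg at hcon
      have : D k ≤ ∑ o : ι, if f o = k then (0:ℤ) else 0 := by
        refine hDbound k _ fun o ho => ?_
        rcases hbi k o with h1 | h1
        · have hvi := hFI2 k hki o ho h1 (by omega)
          rcases hbi j o with h3 | h3 <;> rw [hvi, h3] <;> norm_num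
        · rcases hbi i o with h2 | h2
          · rcases hbi j o with h3 | h3 <;> rw [h2, h3] <;> norm_num
          · rcases hbi j o with h3 | h3
            · exact absurd h3 (hcon o ho h1 h2)
            · rw [h2, h3]; norm_num
      simp at this
      omega
    -- find the negative item c
    obtain ⟨c, hc, hkc, hjc⟩ : ∃ c, f c = k ∧ v k c = -1 ∧ v j c = -1 := by
      by_contra hcon
      push_neg at hcon
      have hDle : D k ≤ 2 * eqxVal v f k := by
        rw [← hsumc 2 k]
        refine hDbound k _ fun o' ho' => ?_
        rcases hbi k o' with h1 | h1
        · have hvi := hFI2 k hki o' ho' h1 (by omega)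
          rcases hbi j o' with h3 | h3
          · exact absurd h3 (hcon o' ho' h1)
          · rw [hvi, h3, h1]; norm_num
        · rcases hbi i o' with h2 | h2 <;> rcases hbi j o' with h3 | h3 <;>
            rw [h1, h2, h3] <;> norm_num
      omega
    have hoc : o ≠ c := by
      intro he
      rw [he, hkc] at hko
      omega
    have hs := eqxStabD v f hmin o c hoc (by rw [hc, ho]) i j
      (by rw [ho]; exact Ne.symm hki) (by rw [ho]; exact Ne.symm hkj) hij'
    rw [ho, hko, hkc, hio, hjc, hx0, ← ha_def, ← hb_def, hae, hbe] at hs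
    rw [show (0:ℤ) - 1 - (-1) = 0 by norm_num, show (-1:ℤ) + 1 = 0 by norm_num,
        show (1:ℤ) + -1 = 0 by norm_num] at hs
    have := hh_L5
    linarith
  · -- NON-EDGE: b - a ≥ 3
    have hDk : ∀ k, k ≠ i → k ≠ j → D k ≤ 0 := by
      intro k hki hkj
      rcases le_or_gt (eqxVal v f k) (a + 1) with hx | hx
      · -- low
        have hDle : D k ≤ 2 * eqxVal v f k := by
          rw [← hsumc 2 k]
          refine hDbound k _ fun o ho => ?_
          rcases hbi k o with h1 | h1
          · have hvi := hFI2 k hki o ho h1 (by omega)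
            have hvj := hFJ2 k hkj o ho h1 (by omega)
            rw [hvi, hvj, h1]; norm_num
          · rcases hbi i o with h2 | h2 <;> rcases hbi j o with h3 | h3 <;>
              rw [h1, h2, h3] <;> norm_num
        omega
      · rcases le_or_gt (eqxVal v f k + a) (-1) with hx2 | hx2
        · -- midB: every item has v i o = -1
          have : D k ≤ ∑ o : ι, if f o = k then (0:ℤ) else 0 := by
            refine hDbound k _ fun o ho => ?_
            rcases hbi k o with h1 | h1
            · have hvi := hFI2 k hki o ho h1 (by omega)
              rcases hbi j o with h3 | h3 <;> rw [hvi, h3] <;> norm_num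
            · have hvi := hFI1 k hki o ho h1 (by omega)
              rcases hbi j o with h3 | h3 <;> rw [hvi, h3] <;> norm_num
          simpa using this
        · rcases le_or_gt (eqxVal v f k + 2) b with hx3 | hx3
          · -- midA
            have : D k ≤ ∑ o : ι, if f o = k then (0:ℤ) else 0 := by
              refine hDbound k _ fun o ho => ?_
              rcases hbi k o with h1 | h1
              · have hvj := hFJ2 k hkj o ho h1 hx3
                rcases hbi i o with h2 | h2 <;> rw [hvj, h2] <;> norm_num
              · have hvi := hFI1 k hki o ho h1 (by omega)
                rcases hbi j o with h3 | h3 <;> rw [hvi, h3] <;> norm_num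
            simpa using this
          · -- high: x ≥ -a and x ≥ b - 1
            have hDle : D k ≤ -2 * eqxVal v f k := by
              rw [← hsumc (-2) k]
              refine hDbound k _ fun o ho => ?_
              rcases hbi k o with h1 | h1
              · rcases hbi i o with h2 | h2 <;> rcases hbi j o with h3 | h3 <;>
                  rw [h1, h2, h3] <;> norm_num
              · have hvi := hFI1 k hki o ho h1 (by omega)
                have hvj := hFJ1 k hkj o ho h1 (by omega)
                rw [hvi, hvj, h1]; norm_num
            omega
    have hrest : ∑ k ∈ (univ.erase i).erase j, D k ≤ 0 :=
      Finset.sum_nonpos fun k hk => hDk k (hmem k hk).1 (hmem k hk).2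
    omega

end

/-- Every normalized instance with {-1,1} valuations admits an EQX allocation. -/
theorem stmt6 {n : ℕ} (hn : 0 < n) {ι : Type*} [Fintype ι] [DecidableEq ι]
    (v : Fin n → ι → ℤ)
    (hbi : ∀ i o, v i o = -1 ∨ v i o = 1)
    (K : ℤ) (hnorm : ∀ i, ∑ o, v i o = K) :
    ∃ A : Fin n → Finset ι, isAllocation A ∧ EQX v A := by
  have hne : Nonempty (ι → Fin n) := ⟨fun _ => ⟨0, hn⟩⟩
  obtain ⟨f, -, hmin'⟩ := Finset.exists_min_image (univ : Finset (ι → Fin n)) (eqxPhi v)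
    Finset.univ_nonempty
  have hmin : ∀ g : ι → Fin n, eqxPhi v f ≤ eqxPhi v g := fun g => hmin' g (Finset.mem_univ g)
  refine ⟨fun k => univ.filter (fun o => f o = k), ⟨?_, ?_⟩, ?_⟩
  · intro i j hij
    rw [Finset.disjoint_left]
    intro o ho1 ho2
    simp only [Finset.mem_filter] at ho1 ho2
    exact hij (ho1.2.symm.trans ho2.2)
  · ext o
    simp only [Finset.mem_biUnion, Finset.mem_filter, Finset.mem_univ, true_and, iff_true]
    exact ⟨f o, rfl⟩
  · intro i j hlt
    have hval : ∀ k, ∑ o ∈ univ.filter (fun o => f o = k), v k o = eqxVal v f k := fun k => by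
      rw [Finset.sum_filter]; rfl
    constructor
    · intro g hg hg0
      simp only [Finset.mem_filter] at hg
      have hg1 : v j g = 1 := by
        rcases hbi j g with h | h
        · omega
        · exact h
      have herase : ∑ o ∈ (univ.filter (fun o => f o = j)).erase g, v j o
          = eqxVal v f j - v j g := by
        have h2 := Finset.add_sum_erase (univ.filter (fun o => f o = j)) (v j)
          (Finset.mem_filter.mpr ⟨Finset.mem_univ g, hg.2⟩)
        rw [hval j] at h2
        omega
      rw [herase, hval i, hg1]
      by_contra hcon
      push_neg at hcon
      exact eqxMain v hbi K hnorm f hmin i j (Or.inl ⟨g, hg.2, hg1⟩) (by omega)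
    · intro c hc hc0
      simp only [Finset.mem_filter] at hc
      have hc1 : v i c = -1 := by
        rcases hbi i c with h | h
        · exact h
        · omega
      have herase : ∑ o ∈ (univ.filter (fun o => f o = i)).erase c, v i o
          = eqxVal v f i - v i c := by
        have h2 := Finset.add_sum_erase (univ.filter (fun o => f o = i)) (v i)
          (Finset.mem_filter.mpr ⟨Finset.mem_univ c, hc.2⟩)
        rw [hval i] at h2
        omega
      rw [herase, hval j, hc1]
      by_contra hcon
      push_neg at hcon
      exact eqxMain v hbi K hnorm f hmin i j (Or.inr ⟨c, hc.2, hc1⟩) (by omega)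
end

section
/- Consider the fair division instance with two agents and nine items o_1, …, o_9 where agent 1's values are (1, 1, 1, 0, 0, 0, -1, -1, -1) and agent 2's values are (-1, -1, -1, 1, 1, 1, 0, 0, 0). This instance is type-normalized, its set of subjective items is O^± = {o_1, o_2, o_3}, and no partial allocation of O^± between the two agents is EQ1. -/
open Finset

/-- The valuations of the two agents over the nine items. -/
def v8 : Fin 2 → Fin 9 → ℤ :=
  ![![1, 1, 1, 0, 0, 0, -1, -1, -1], ![-1, -1, -1, 1, 1, 1, 0, 0, 0]]


instance {n : ℕ} {ι : Type*} [DecidableEq ι] [Fintype ι] (v : Fin n → ι → ℤ)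
    (A : Fin n → Finset ι) : Decidable (EQ1 v A) := by
  unfold EQ1; infer_instance

set_option maxRecDepth 20000 in
lemma aux8 : ∀ s ∈ (({0,1,2} : Finset (Fin 9))).powerset,
    ¬ EQ1 v8 ![s, ({0,1,2} : Finset (Fin 9)) \ s] := by decide

/-- The instance is type-normalized, its subjective items are exactly {o₁,o₂,o₃},
and no partial allocation of the subjective items is EQ1. -/
theorem stmt8 :
    (∃ g c : ℤ, ∀ i : Fin 2,
      (∑ o ∈ Finset.univ.filter (fun o => 0 ≤ v8 i o), v8 i o) = g ∧
      (∑ o ∈ Finset.univ.filter (fun o => v8 i o ≤ 0), v8 i o) = c) ∧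
    (Finset.univ.filter (fun o => (∃ i, 0 < v8 i o) ∧ (∃ i, v8 i o < 0))
      = ({0, 1, 2} : Finset (Fin 9))) ∧
    (∀ A : Fin 2 → Finset (Fin 9),
      isPartialAllocation A ({0, 1, 2} : Finset (Fin 9)) → ¬ EQ1 v8 A) := by
  refine ⟨⟨3, -3, by decide⟩, by decide, ?_⟩
  rintro A ⟨hd, hu⟩ hEQ
  have hun : A 0 ∪ A 1 = ({0,1,2} : Finset (Fin 9)) := by
    rw [← hu]; ext x; simp [Fin.exists_fin_two]
  have h0 : A 0 ⊆ ({0,1,2} : Finset (Fin 9)) := hun ▸ Finset.subset_union_left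
  have h1 : A 1 = ({0,1,2} : Finset (Fin 9)) \ A 0 := by
    rw [← hun, Finset.union_sdiff_cancel_left (hd 0 1 (by decide))]
  have hA : A = ![A 0, ({0,1,2} : Finset (Fin 9)) \ A 0] := by
    funext i; fin_cases i
    · rfl
    · simpa using h1
  exact aux8 (A 0) (Finset.mem_powerset.mpr h0) (hA ▸ hEQ)
end

section
/- Consider the fair division instance with two agents and two items where agent 1's values are (10, -15) and agent 2's values are (-2, -3); this instance is normalized, since each agent values the whole set of items at -5. The unique allocation maximizing the minimum utility min_i v_i(A_i) over all allocations gives item 1 to agent 1 and item 2 to agent 2, and this allocation is not EQ1. -/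
open Finset

/-- Agent 1 values the items at (10, -15); agent 2 at (-2, -3). -/
def v9 : Fin 2 → Fin 2 → ℤ := ![![10, -15], ![-2, -3]]

/-- The leximin++ allocation: item 1 to agent 1 and item 2 to agent 2. -/
def A9 : Fin 2 → Finset (Fin 2) := ![{0}, {1}]

/-- The instance is normalized (both agents value the whole set at -5);
`A9` is the unique allocation maximizing the minimum utility, and it is not EQ1. -/
theorem stmt9 :
    (∀ i : Fin 2, ∑ o, v9 i o = -5) ∧
    isAllocation A9 ∧
    (∀ A : Fin 2 → Finset (Fin 2), isAllocation A →
      min (∑ o ∈ A 0, v9 0 o) (∑ o ∈ A 1, v9 1 o) ≤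
        min (∑ o ∈ A9 0, v9 0 o) (∑ o ∈ A9 1, v9 1 o)) ∧
    (∀ A : Fin 2 → Finset (Fin 2), isAllocation A →
      min (∑ o ∈ A 0, v9 0 o) (∑ o ∈ A 1, v9 1 o) =
        min (∑ o ∈ A9 0, v9 0 o) (∑ o ∈ A9 1, v9 1 o) → A = A9) ∧
    ¬ EQ1 v9 A9 := by
  unfold isAllocation EQ1
  refine ⟨by decide, by decide, by decide, by decide, by decide⟩
end

section
/- Every type-normalized fair division instance with two agents admits an EQ1 allocation. -/
open Finset

section Helpers

variable {ι : Type*} [Fintype ι] [DecidableEq ι]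

/-- Any EQ1-witnessing pair of conditional guarantees for the allocation `(S, Sᶜ)`
gives an EQ1 allocation. -/
lemma eq1_of_pair (v : Fin 2 → ι → ℤ) (S : Finset ι)
    (h01 : ∑ o ∈ S, v 0 o < ∑ o ∈ Sᶜ, v 1 o →
      (∃ g ∈ Sᶜ, 0 ≤ v 1 g ∧ ∑ o ∈ Sᶜ.erase g, v 1 o ≤ ∑ o ∈ S, v 0 o) ∨
      (∃ c ∈ S, v 0 c ≤ 0 ∧ ∑ o ∈ Sᶜ, v 1 o ≤ ∑ o ∈ S.erase c, v 0 o))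
    (h10 : ∑ o ∈ Sᶜ, v 1 o < ∑ o ∈ S, v 0 o →
      (∃ g ∈ S, 0 ≤ v 0 g ∧ ∑ o ∈ S.erase g, v 0 o ≤ ∑ o ∈ Sᶜ, v 1 o) ∨
      (∃ c ∈ Sᶜ, v 1 c ≤ 0 ∧ ∑ o ∈ S, v 0 o ≤ ∑ o ∈ Sᶜ.erase c, v 1 o)) :
    ∃ A : Fin 2 → Finset ι, isAllocation A ∧ EQ1 v A := by
  refine ⟨![S, Sᶜ], ⟨?_, ?_⟩, ?_⟩
  · intro i j hij
    fin_cases i <;> fin_cases j <;>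
      simp_all [disjoint_compl_right, disjoint_compl_left]
  · ext x
    simp [Fin.exists_fin_two]
    tauto
  · intro i j h
    fin_cases i <;> fin_cases j <;> simp_all

/-- Crossing by inserting a good-for-both item. -/
lemma cross_add (v : Fin 2 → ι → ℤ) (S : Finset ι) (o : ι) (ho : o ∉ S)
    (h0 : 0 ≤ v 0 o) (h1 : 0 ≤ v 1 o)
    (hlt : ∑ x ∈ S, v 0 x < ∑ x ∈ Sᶜ, v 1 x)
    (hge : ∑ x ∈ (insert o S)ᶜ, v 1 x ≤ ∑ x ∈ insert o S, v 0 x) :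
    ∃ A : Fin 2 → Finset ι, isAllocation A ∧ EQ1 v A := by
  have hoc : o ∈ Sᶜ := by simpa using ho
  have e1 : ∑ x ∈ insert o S, v 0 x = v 0 o + ∑ x ∈ S, v 0 x := sum_insert ho
  have e2 : ∑ x ∈ (insert o S)ᶜ, v 1 x = ∑ x ∈ Sᶜ, v 1 x - v 1 o := by
    rw [compl_insert, sum_erase_eq_sub hoc]
  by_cases hc : ∑ x ∈ Sᶜ, v 1 x - v 1 o ≤ ∑ x ∈ S, v 0 x
  · refine eq1_of_pair v S (fun _ => Or.inl ⟨o, hoc, h1, ?_⟩) (fun h => absurd h (by omega))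
    rw [sum_erase_eq_sub hoc]; exact hc
  · push_neg at hc
    refine eq1_of_pair v (insert o S) (fun h => absurd h (by omega))
      (fun _ => Or.inl ⟨o, mem_insert_self o S, h0, ?_⟩)
    rw [erase_insert ho, e2]; omega

/-- Crossing by removing a chore-for-both item. -/
lemma cross_rem (v : Fin 2 → ι → ℤ) (S : Finset ι) (o : ι) (ho : o ∈ S)
    (h0 : v 0 o ≤ 0) (h1 : v 1 o ≤ 0)
    (hlt : ∑ x ∈ S, v 0 x < ∑ x ∈ Sᶜ, v 1 x)
    (hge : ∑ x ∈ (S.erase o)ᶜ, v 1 x ≤ ∑ x ∈ S.erase o, v 0 x) :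
    ∃ A : Fin 2 → Finset ι, isAllocation A ∧ EQ1 v A := by
  have hoc : o ∉ Sᶜ := by simpa using ho
  have e1 : ∑ x ∈ S.erase o, v 0 x = ∑ x ∈ S, v 0 x - v 0 o := sum_erase_eq_sub ho
  have e2 : ∑ x ∈ (S.erase o)ᶜ, v 1 x = v 1 o + ∑ x ∈ Sᶜ, v 1 x := by
    rw [compl_erase, sum_insert hoc]
  by_cases hc : ∑ x ∈ Sᶜ, v 1 x ≤ ∑ x ∈ S, v 0 x - v 0 o
  · refine eq1_of_pair v S (fun _ => Or.inr ⟨o, ho, h0, ?_⟩) (fun h => absurd h (by omega))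
    rw [e1]; exact hc
  · push_neg at hc
    refine eq1_of_pair v (S.erase o) (fun h => absurd h (by omega))
      (fun _ => Or.inr ⟨o, by simp [compl_erase], h1, ?_⟩)
    rw [compl_erase, erase_insert hoc, e1]; omega

/-- Removal phase: removing chores-for-both one at a time, the difference is
nondecreasing, so a crossing occurs somewhere. -/
lemma rem_phase (v : Fin 2 → ι → ℤ) (T : Finset ι) :
    ∀ S : Finset ι, T ⊆ S → (∀ o ∈ T, v 0 o ≤ 0 ∧ v 1 o ≤ 0) →
    ∑ x ∈ S, v 0 x < ∑ x ∈ Sᶜ, v 1 x →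
    ∑ x ∈ (S \ T)ᶜ, v 1 x ≤ ∑ x ∈ S \ T, v 0 x →
    ∃ A : Fin 2 → Finset ι, isAllocation A ∧ EQ1 v A := by
  induction T using Finset.induction_on with
  | empty => intro S _ _ hlt hge; simp at hge; omega
  | @insert o T' honT ih =>
    intro S hsub hch hlt hge
    have hoS : o ∈ S := hsub (mem_insert_self _ _)
    have hch0 := hch o (mem_insert_self _ _)
    by_cases hcr : ∑ x ∈ (S.erase o)ᶜ, v 1 x ≤ ∑ x ∈ S.erase o, v 0 x
    · exact cross_rem v S o hoS hch0.1 hch0.2 hlt hcr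
    · push_neg at hcr
      have hE : S.erase o \ T' = S \ insert o T' := by
        ext x; simp [mem_erase, and_comm]; tauto
      refine ih (S.erase o) ?_ (fun a ha => hch a (mem_insert_of_mem ha)) hcr ?_
      · intro x hx
        exact mem_erase.mpr ⟨fun h => honT (h ▸ hx), hsub (mem_insert_of_mem hx)⟩
      · rw [hE]; exact hge

/-- Addition phase: adding goods-for-both one at a time, the difference is
nondecreasing, so a crossing occurs somewhere. -/
lemma add_phase (v : Fin 2 → ι → ℤ) (T : Finset ι) :
    ∀ S : Finset ι, Disjoint T S → (∀ o ∈ T, 0 ≤ v 0 o ∧ 0 ≤ v 1 o) →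
    ∑ x ∈ S, v 0 x < ∑ x ∈ Sᶜ, v 1 x →
    ∑ x ∈ (S ∪ T)ᶜ, v 1 x ≤ ∑ x ∈ S ∪ T, v 0 x →
    ∃ A : Fin 2 → Finset ι, isAllocation A ∧ EQ1 v A := by
  induction T using Finset.induction_on with
  | empty => intro S _ _ hlt hge; simp at hge; omega
  | @insert o T' honT ih =>
    intro S hdis hgd hlt hge
    have hoS : o ∉ S := by
      intro h; exact (disjoint_left.mp hdis (mem_insert_self _ _)) h
    have hgd0 := hgd o (mem_insert_self _ _)
    by_cases hcr : ∑ x ∈ (insert o S)ᶜ, v 1 x ≤ ∑ x ∈ insert o S, v 0 x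
    · exact cross_add v S o hoS hgd0.1 hgd0.2 hlt hcr
    · push_neg at hcr
      have hE : insert o S ∪ T' = S ∪ insert o T' := by
        ext x; simp
      refine ih (insert o S) ?_ (fun a ha => hgd a (mem_insert_of_mem ha)) hcr ?_
      · rw [disjoint_insert_right]
        exact ⟨honT, (disjoint_insert_left.mp hdis).2⟩
      · rw [hE]; exact hge

omit [DecidableEq ι] in
/-- Dropping negative terms and adding nonnegative ones only increases a sum. -/
lemma sum_le_posPart (f : ι → ℤ) (S : Finset ι) :
    ∑ x ∈ S, f x ≤ ∑ x ∈ univ.filter (fun o => 0 ≤ f o), f x := by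
  have h1 : ∑ x ∈ S, f x ≤ ∑ x ∈ S.filter (fun o => 0 ≤ f o), f x := by
    rw [← Finset.sum_filter_add_sum_filter_not S (fun o => 0 ≤ f o)]
    have h2 : ∑ x ∈ S.filter (fun o => ¬ 0 ≤ f o), f x ≤ 0 :=
      Finset.sum_nonpos (fun x hx => le_of_lt (by simpa using (mem_filter.mp hx).2))
    omega
  refine h1.trans (Finset.sum_le_sum_of_subset_of_nonneg ?_ ?_)
  · exact filter_subset_filter _ (subset_univ S)
  · intro x hx _
    exact (mem_filter.mp hx).2

end Helpers

/-- Every type-normalized instance with two agents admits an EQ1 allocation. -/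
theorem stmt10 {ι : Type*} [Fintype ι] [DecidableEq ι]
    (v : Fin 2 → ι → ℤ) (g c : ℤ)
    (htype : ∀ i : Fin 2,
      (∑ o ∈ Finset.univ.filter (fun o => 0 ≤ v i o), v i o) = g ∧
      (∑ o ∈ Finset.univ.filter (fun o => v i o ≤ 0), v i o) = c) :
    ∃ A : Fin 2 → Finset ι, isAllocation A ∧ EQ1 v A := by
  obtain ⟨hg0, -⟩ := htype 0
  obtain ⟨hg1, -⟩ := htype 1
  set N1 := univ.filter (fun o => v 1 o < 0) with hN1
  have hN1c : N1ᶜ = univ.filter (fun o => 0 ≤ v 1 o) := by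
    ext x; simp [hN1, not_lt]
  have hb : ∑ x ∈ N1ᶜ, v 1 x = g := by rw [hN1c]; exact hg1
  have ha : ∑ x ∈ N1, v 0 x ≤ g := by rw [← hg0]; exact sum_le_posPart _ _
  rcases lt_or_ge (∑ x ∈ N1, v 0 x) (∑ x ∈ N1ᶜ, v 1 x) with hlt | hge
  · -- strict deficit at the start: walk towards `{o | 0 ≤ v 0 o}` where there is a surplus
    set T_rem := N1.filter (fun o => v 0 o < 0) with hTr
    set M := N1 \ T_rem with hM
    by_cases hMc : ∑ x ∈ Mᶜ, v 1 x ≤ ∑ x ∈ M, v 0 x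
    · refine rem_phase v T_rem N1 (filter_subset _ _) ?_ hlt hMc
      intro o ho
      simp only [hTr, hN1, mem_filter, mem_univ, true_and] at ho
      omega
    · push_neg at hMc
      set T_add := univ.filter (fun o => 0 ≤ v 0 o ∧ 0 ≤ v 1 o) with hTa
      have hUnion : M ∪ T_add = univ.filter (fun o => 0 ≤ v 0 o) := by
        ext x
        simp only [hM, hTr, hN1, hTa, mem_union, mem_sdiff, mem_filter, mem_univ, true_and]
        omega
      have hdis : Disjoint T_add M := by
        rw [disjoint_left]
        intro x hx hx'
        simp only [hTa, mem_filter, mem_univ, true_and] at hx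
        simp only [hM, hTr, hN1, mem_sdiff, mem_filter, mem_univ, true_and] at hx'
        omega
      refine add_phase v T_add M hdis ?_ hMc ?_
      · intro o ho
        simp only [hTa, mem_filter, mem_univ, true_and] at ho
        exact ho
      · rw [hUnion, hg0]
        have h3 : ∑ x ∈ (univ.filter (fun o => 0 ≤ v 0 o))ᶜ, v 1 x ≤ g := by
          rw [← hg1]; exact sum_le_posPart _ _
        exact h3
  · -- the two sides are exactly equal: `(N1, N1ᶜ)` is trivially EQ1
    have heq : ∑ x ∈ N1, v 0 x = ∑ x ∈ N1ᶜ, v 1 x := le_antisymm (by omega) hge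
    exact eq1_of_pair v N1 (fun h => absurd h (by omega)) (fun h => absurd h (by omega))
end

section
/- In a type-normalized fair division instance with two agents in which every item is subjective (each item is valued strictly positively by one agent and strictly negatively by the other), every Pareto optimal allocation is equitable (EQ); in particular, such an instance admits an EQ allocation. -/
open Finset

/-- Pareto optimality. -/
def Pareto {n : ℕ} {ι : Type*} [Fintype ι] [DecidableEq ι]
    (v : Fin n → ι → ℤ) (A : Fin n → Finset ι) : Prop :=
  ¬ ∃ B : Fin n → Finset ι, isAllocation B ∧
      (∀ i, ∑ o ∈ A i, v i o ≤ ∑ o ∈ B i, v i o) ∧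
      (∃ j, ∑ o ∈ A j, v j o < ∑ o ∈ B j, v j o)

/-- Exact equitability. -/
def EQ {n : ℕ} {ι : Type*} [DecidableEq ι]
    (v : Fin n → ι → ℤ) (A : Fin n → Finset ι) : Prop :=
  ∀ i j : Fin n, ∑ o ∈ A i, v i o = ∑ o ∈ A j, v j o

/-- In a type-normalized instance with two agents where every item is subjective,
every Pareto optimal allocation is equitable; in particular an EQ allocation exists. -/
theorem stmt11 {ι : Type*} [Fintype ι] [DecidableEq ι]
    (v : Fin 2 → ι → ℤ) (g c : ℤ)
    (htype : ∀ i : Fin 2,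
      (∑ o ∈ Finset.univ.filter (fun o => 0 ≤ v i o), v i o) = g ∧
      (∑ o ∈ Finset.univ.filter (fun o => v i o ≤ 0), v i o) = c)
    (hsub : ∀ o : ι, ∃ i j : Fin 2, i ≠ j ∧ 0 < v i o ∧ v j o < 0) :
    (∀ A : Fin 2 → Finset ι, isAllocation A → Pareto v A → EQ v A) ∧
    (∃ A : Fin 2 → Finset ι, isAllocation A ∧ EQ v A) := by
  have htwo : ∀ j k l : Fin 2, j ≠ k → l = k ∨ l = j := by decide
  have hzo : ∀ l : Fin 2, l = 0 ∨ l = 1 := by decide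
  have hkey : ∀ o : ι, (0 < v 0 o ∧ v 1 o < 0) ∨ (0 < v 1 o ∧ v 0 o < 0) := by
    intro o
    obtain ⟨i, j, hij, h1, h2⟩ := hsub o
    rcases hzo i with rfl | rfl <;> rcases hzo j with rfl | rfl <;>
      first | exact absurd rfl hij | tauto
  have hne : ∀ (i : Fin 2) (o : ι), v i o ≠ 0 := by
    intro i o
    rcases hkey o with ⟨h1, h2⟩ | ⟨h1, h2⟩ <;> rcases hzo i with rfl | rfl <;> omega
  have hfilter : ∀ i : Fin 2,
      Finset.univ.filter (fun o => 0 ≤ v i o) = Finset.univ.filter (fun o => 0 < v i o) := by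
    intro i
    ext o
    have := hne i o
    simp only [Finset.mem_filter, Finset.mem_univ, true_and]
    omega
  have hsumg : ∀ i : Fin 2, ∑ o ∈ Finset.univ.filter (fun o => 0 < v i o), v i o = g := by
    intro i
    rw [← hfilter i]
    exact (htype i).1
  have main : ∀ A : Fin 2 → Finset ι, isAllocation A → Pareto v A →
      ∀ i : Fin 2, A i = Finset.univ.filter (fun o => 0 < v i o) := by
    intro A hA hP i
    obtain ⟨hdisj, hcover⟩ := hA
    have hmem : ∀ x : ι, ∃ k : Fin 2, x ∈ A k := by
      intro x
      have hx : x ∈ Finset.univ.biUnion A := by rw [hcover]; exact Finset.mem_univ x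
      simpa using hx
    have hpos : ∀ k : Fin 2, ∀ o ∈ A k, 0 < v k o := by
      intro k o ho
      by_contra hle
      push_neg at hle
      have hneg : v k o < 0 := lt_of_le_of_ne hle (hne k o)
      obtain ⟨j, hjk, hjo⟩ : ∃ j : Fin 2, j ≠ k ∧ 0 < v j o := by
        rcases hkey o with ⟨h1, h2⟩ | ⟨h1, h2⟩
        · refine ⟨0, ?_, h1⟩
          rcases hzo k with rfl | rfl
          · exfalso; omega
          · decide
        · refine ⟨1, ?_, h1⟩
          rcases hzo k with rfl | rfl
          · decide
          · exfalso; omega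
      have hoj : o ∉ A j := Finset.disjoint_left.mp (hdisj k j (Ne.symm hjk)) ho
      apply hP
      refine ⟨fun l => if l = k then (A k).erase o else insert o (A j), ⟨?_, ?_⟩, ?_, ?_⟩
      · intro a b hab
        beta_reduce
        rcases htwo j k a hjk with ha | ha <;> rcases htwo j k b hjk with hb | hb
        · exact absurd (ha.trans hb.symm) hab
        · rw [if_pos ha, if_neg (show ¬ b = k by rw [hb]; exact hjk)]
          rw [Finset.disjoint_insert_right]
          exact ⟨Finset.notMem_erase _ _,
            Finset.disjoint_of_subset_left (Finset.erase_subset _ _) (hdisj k j (Ne.symm hjk))⟩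
        · rw [if_neg (show ¬ a = k by rw [ha]; exact hjk), if_pos hb]
          rw [Finset.disjoint_insert_left]
          exact ⟨Finset.notMem_erase _ _,
            Finset.disjoint_of_subset_right (Finset.erase_subset _ _) (hdisj j k hjk)⟩
        · exact absurd (ha.trans hb.symm) hab
      · ext x
        simp only [Finset.mem_biUnion, Finset.mem_univ, iff_true, true_and]
        obtain ⟨l, hl⟩ := hmem x
        rcases htwo j k l hjk with hl' | hl' <;> rw [hl'] at hl
        · by_cases hx : x = o
          · exact ⟨j, by rw [if_neg hjk]; simp [hx]⟩
          · exact ⟨k, by rw [if_pos rfl]; exact Finset.mem_erase.mpr ⟨hx, hl⟩⟩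
        · exact ⟨j, by rw [if_neg hjk]; exact Finset.mem_insert_of_mem hl⟩
      · intro l
        beta_reduce
        rcases htwo j k l hjk with hl | hl <;> rw [hl]
        · rw [if_pos rfl]
          have := Finset.sum_erase_add (A k) (v k) ho
          omega
        · rw [if_neg hjk, Finset.sum_insert hoj]
          omega
      · refine ⟨k, ?_⟩
        beta_reduce
        rw [if_pos rfl]
        have := Finset.sum_erase_add (A k) (v k) ho
        omega
    ext o
    simp only [Finset.mem_filter, Finset.mem_univ, true_and]
    constructor
    · intro ho; exact hpos i o ho
    · intro hv
      obtain ⟨l, hl⟩ := hmem o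
      by_cases hli : l = i
      · subst hli; exact hl
      · exfalso
        have hlp := hpos l o hl
        rcases hkey o with ⟨h1, h2⟩ | ⟨h1, h2⟩ <;>
          rcases hzo l with rfl | rfl <;> rcases hzo i with rfl | rfl <;>
          first | exact hli rfl | omega
  constructor
  · intro A hA hP i j
    rw [main A hA hP i, main A hA hP j, hsumg i, hsumg j]
  · refine ⟨fun i => Finset.univ.filter (fun o => 0 < v i o), ⟨?_, ?_⟩, ?_⟩
    · intro i j hij
      rw [Finset.disjoint_left]
      intro a ha hb
      simp only [Finset.mem_filter, Finset.mem_univ, true_and] at ha hb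
      rcases hkey a with ⟨h1, h2⟩ | ⟨h1, h2⟩ <;>
        rcases hzo i with rfl | rfl <;> rcases hzo j with rfl | rfl <;>
        first | exact hij rfl | omega
    · ext x
      simp only [Finset.mem_biUnion, Finset.mem_univ, iff_true, Finset.mem_filter, true_and]
      rcases hkey x with ⟨h1, _⟩ | ⟨h1, _⟩
      · exact ⟨0, h1⟩
      · exact ⟨1, h1⟩
    · intro i j
      rw [hsumg i, hsumg j]
end

section
/- Consider the fair division instance with three agents and six items where agent 1's values are (1, 1, 1, -1, -1, -1) and agents 2 and 3 each have values (-1, -1, -1, 1, 1, 1). This instance is type-normalized with valuations in {-1, 1}, and it admits no allocation that is simultaneously EQ1 and Pareto optimal. -/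
open Finset

/-- Agent 1 values the items at (1,1,1,-1,-1,-1); agents 2 and 3 at (-1,-1,-1,1,1,1). -/
def v12 : Fin 3 → Fin 6 → ℤ :=
  ![![1, 1, 1, -1, -1, -1], ![-1, -1, -1, 1, 1, 1], ![-1, -1, -1, 1, 1, 1]]

lemma swap_not_pareto {A : Fin 3 → Finset (Fin 6)} (hA : isAllocation A)
    {i j : Fin 3} (hij : i ≠ j) {o : Fin 6} (ho : o ∈ A i)
    (hi : v12 i o < 0) (hj : 0 < v12 j o) : ¬ Pareto v12 A := by
  intro hP
  apply hP
  classical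
  set B : Fin 3 → Finset (Fin 6) :=
    fun k => if k = i then (A i).erase o else if k = j then insert o (A j) else A k with hB
  have hoj : o ∉ A j := Finset.disjoint_left.mp (hA.1 i j hij) ho
  have huniq : ∀ {k l : Fin 3} {x : Fin 6}, x ∈ A k → x ∈ A l → k = l := by
    intro k l x hk hl
    by_contra h
    exact (Finset.disjoint_left.mp (hA.1 k l h) hk) hl
  have hBi : B i = (A i).erase o := by simp [hB]
  have hBj : B j = insert o (A j) := by simp [hB, Ne.symm hij]
  have hBk : ∀ k : Fin 3, k ≠ i → k ≠ j → B k = A k := by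
    intro k h1 h2; simp [hB, h1, h2]
  have hmem : ∀ (k : Fin 3) (x : Fin 6),
      x ∈ B k ↔ (x = o ∧ k = j) ∨ (x ∈ A k ∧ x ≠ o) := by
    intro k x
    by_cases hk : k = i
    · rw [hk, hBi, Finset.mem_erase]
      constructor
      · rintro ⟨h1, h2⟩; exact Or.inr ⟨h2, h1⟩
      · rintro (⟨_, h⟩ | ⟨h1, h2⟩)
        · exact absurd h hij
        · exact ⟨h2, h1⟩
    · by_cases hkj : k = j
      · rw [hkj, hBj, Finset.mem_insert]
        constructor
        · rintro (rfl | h)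
          · exact Or.inl ⟨rfl, rfl⟩
          · exact Or.inr ⟨h, fun hxo => hoj (hxo ▸ h)⟩
        · rintro (⟨rfl, _⟩ | ⟨h, _⟩)
          · exact Or.inl rfl
          · exact Or.inr h
      · rw [hBk k hk hkj]
        constructor
        · intro h
          refine Or.inr ⟨h, fun hxo => ?_⟩
          exact hk (huniq (hxo ▸ h) ho)
        · rintro (⟨_, h⟩ | ⟨h, _⟩)
          · exact absurd h hkj
          · exact h
  refine ⟨B, ⟨?_, ?_⟩, ?_, ⟨i, ?_⟩⟩
  · intro k l hkl
    rw [Finset.disjoint_left]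
    intro x hxk hxl
    rcases (hmem k x).1 hxk with ⟨e1, f1⟩ | ⟨m1, n1⟩ <;>
      rcases (hmem l x).1 hxl with ⟨e2, f2⟩ | ⟨m2, n2⟩
    · exact hkl (f1.trans f2.symm)
    · exact n2 e1
    · exact n1 e2
    · exact hkl (huniq m1 m2)
  · rw [Finset.eq_univ_iff_forall]
    intro x
    rw [Finset.mem_biUnion]
    by_cases hxo : x = o
    · exact ⟨j, Finset.mem_univ j, (hmem j x).2 (Or.inl ⟨hxo, rfl⟩)⟩
    · obtain ⟨k, hk⟩ : ∃ k, x ∈ A k := by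
        have := hA.2
        rw [Finset.eq_univ_iff_forall] at this
        simpa [Finset.mem_biUnion] using this x
      exact ⟨k, Finset.mem_univ k, (hmem k x).2 (Or.inr ⟨hk, hxo⟩)⟩
  · intro k
    by_cases hk : k = i
    · rw [hk, hBi, Finset.sum_erase_eq_sub ho]
      linarith
    · by_cases hkj : k = j
      · rw [hkj, hBj, Finset.sum_insert hoj]
        linarith
      · rw [hBk k hk hkj]
  · rw [hBi, Finset.sum_erase_eq_sub ho]
    linarith

lemma v12_neg {k : Fin 3} {x : Fin 6} (hk : k ≠ 0) (hx : x.val < 3) : v12 k x < 0 := by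
  revert hk hx; revert k x; decide

lemma v12_pos {k : Fin 3} {x : Fin 6} (hk : k ≠ 0) (hx : 3 ≤ x.val) : v12 k x = 1 := by
  revert hk hx; revert k x; decide

lemma v12_0neg {x : Fin 6} (hx : 3 ≤ x.val) : v12 0 x < 0 := by
  revert hx; revert x; decide

lemma v12_0pos {x : Fin 6} (hx : x.val < 3) : 0 < v12 0 x := by
  revert hx; revert x; decide

/-- The instance has {-1,1} valuations, is type-normalized, and admits no
allocation that is simultaneously EQ1 and Pareto optimal. -/
theorem stmt12 :
    (∀ (i : Fin 3) (o : Fin 6), v12 i o = -1 ∨ v12 i o = 1) ∧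
    (∃ g c : ℤ, ∀ i : Fin 3,
      (∑ o ∈ Finset.univ.filter (fun o => 0 ≤ v12 i o), v12 i o) = g ∧
      (∑ o ∈ Finset.univ.filter (fun o => v12 i o ≤ 0), v12 i o) = c) ∧
    ¬ ∃ A : Fin 3 → Finset (Fin 6), isAllocation A ∧ EQ1 v12 A ∧ Pareto v12 A := by
  refine ⟨by decide, ⟨3, -3, by decide⟩, ?_⟩
  rintro ⟨A, hA, hEQ, hPO⟩
  have owner : ∀ x : Fin 6, ∃ k, x ∈ A k := by
    intro x
    have := hA.2
    rw [Finset.eq_univ_iff_forall] at this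
    simpa [Finset.mem_biUnion] using this x
  have claim1 : ∀ x : Fin 6, x.val < 3 → x ∈ A 0 := by
    intro x hx
    obtain ⟨k, hk⟩ := owner x
    by_cases h : k = 0
    · exact h ▸ hk
    · exact absurd hPO (swap_not_pareto hA h hk (v12_neg h hx) (v12_0pos hx))
  have claim2 : ∀ x : Fin 6, 3 ≤ x.val → x ∉ A 0 := by
    intro x hx h0
    exact swap_not_pareto hA (show (0 : Fin 3) ≠ 1 by decide) h0
      (v12_0neg hx) (by rw [v12_pos (show (1 : Fin 3) ≠ 0 by decide) hx]; norm_num) hPO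
  have hA0 : A 0 = ({0, 1, 2} : Finset (Fin 6)) := by
    have hiff : ∀ x : Fin 6, x ∈ ({0, 1, 2} : Finset (Fin 6)) ↔ x.val < 3 := by decide
    ext x
    rw [hiff]
    constructor
    · intro hx
      by_contra h
      exact claim2 x (by omega) hx
    · exact claim1 x
  have hsum0 : ∑ o ∈ A 0, v12 0 o = 3 := by rw [hA0]; decide
  have hsub : ∀ k : Fin 3, k ≠ 0 → ∀ x ∈ A k, 3 ≤ x.val := by
    intro k hk x hx
    by_contra h
    exact Finset.disjoint_left.mp (hA.1 k 0 hk) hx (claim1 x (by omega))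
  have hsumk : ∀ k : Fin 3, k ≠ 0 → ∑ o ∈ A k, v12 k o = (A k).card := by
    intro k hk
    rw [Finset.sum_congr rfl (fun x hx => v12_pos hk (hsub k hk x hx))]
    simp
  have hcard : (A 1).card + (A 2).card = 3 := by
    have hu : A 1 ∪ A 2 = ({3, 4, 5} : Finset (Fin 6)) := by
      have hiff : ∀ x : Fin 6, x ∈ ({3, 4, 5} : Finset (Fin 6)) ↔ 3 ≤ x.val := by decide
      ext x
      rw [hiff, Finset.mem_union]
      constructor
      · rintro (h | h)
        · exact hsub 1 (by decide) x h
        · exact hsub 2 (by decide) x h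
      · intro hx
        obtain ⟨k, hk⟩ := owner x
        have hk0 : k ≠ 0 := fun h => claim2 x hx (h ▸ hk)
        have : k = 1 ∨ k = 2 := by omega
        rcases this with rfl | rfl
        · exact Or.inl hk
        · exact Or.inr hk
    have := Finset.card_union_of_disjoint (hA.1 1 2 (by decide))
    rw [hu] at this
    simpa using this.symm
  have hex : ∃ k : Fin 3, k ≠ 0 ∧ (A k).card ≤ 1 := by
    by_cases h : (A 1).card ≤ 1
    · exact ⟨1, by decide, h⟩
    · exact ⟨2, by decide, by omega⟩
  obtain ⟨k, hk0, hkc⟩ := hex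
  have hkcz : ((A k).card : ℤ) ≤ 1 := by exact_mod_cast hkc
  have hsk := hsumk k hk0
  have hlt : ∑ o ∈ A k, v12 k o < ∑ o ∈ A 0, v12 0 o := by
    rw [hsk, hsum0]; omega
  rcases hEQ k 0 hlt with ⟨g, hg, _, hle⟩ | ⟨c, hc, hcneg, _⟩
  · have hg1 : v12 0 g = 1 := by
      rw [hA0] at hg
      have hg' : g = 0 ∨ g = 1 ∨ g = 2 := by simpa using hg
      rcases hg' with rfl | rfl | rfl <;> decide
    rw [Finset.sum_erase_eq_sub hg, hsum0, hg1, hsk] at hle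
    omega
  · have : v12 k c = 1 := v12_pos hk0 (hsub k hk0 c hc)
    omega
end

section
/- Let r ≥ 4 and let b_1, …, b_{3r} be positive integers with ∑_{k=1}^{3r} b_k = rT for a positive integer T. Consider the fair division instance with r + 1 agents and 3r + 2 items o_1, …, o_{3r+2}, where each agent a_i (i ∈ [r]) values o_k at b_k for k ∈ [3r], values o_{3r+1} at -T, and values o_{3r+2} at -(r-3)T; and agent a_{r+1} values o_k at 0 for k ∈ [3r-1], values o_{3r} at -(r-2)T, values o_{3r+1} at T, and values o_{3r+2} at (r-1)T. Then this instance admits an allocation that is simultaneously EQ1 and Pareto optimal if and only if the multiset {b_1, …, b_{3r}} can be partitioned into r subsets each summing to T. -/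
open Finset

/-- Valuations of the reduced instance: the `r` set-agents value set-item `o_k`
(index `k < 3r`) at `b k`, item `o_{3r+1}` (index `3r`) at `-T`, and item
`o_{3r+2}` (index `3r+1`) at `-(r-3)T`.  The dummy agent values the first
`3r-1` set-items at `0`, the set-item `o_{3r}` (index `3r-1`) at `-(r-2)T`,
item `o_{3r+1}` at `T`, and item `o_{3r+2}` at `(r-1)T`. -/
def v13 (r : ℕ) (T : ℤ) (b : Fin (3 * r) → ℤ) :
    Fin (r + 1) → Fin (3 * r + 2) → ℤ :=
  fun i o =>
    if (i : ℕ) < r then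
      if h : (o : ℕ) < 3 * r then b ⟨o, h⟩
      else if (o : ℕ) = 3 * r then -T
      else -((r : ℤ) - 3) * T
    else
      if (o : ℕ) < 3 * r - 1 then 0
      else if (o : ℕ) = 3 * r - 1 then -((r : ℤ) - 2) * T
      else if (o : ℕ) = 3 * r then T
      else ((r : ℤ) - 1) * T

lemma exists_owner {n : ℕ} {ι : Type*} [Fintype ι] [DecidableEq ι]
    {A : Fin n → Finset ι} (hA : isAllocation A) (o : ι) : ∃ i, o ∈ A i := by
  have h : o ∈ Finset.univ.biUnion A := hA.2 ▸ Finset.mem_univ o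
  obtain ⟨i, -, hi⟩ := Finset.mem_biUnion.mp h
  exact ⟨i, hi⟩

lemma pareto_move {n : ℕ} {ι : Type*} [Fintype ι] [DecidableEq ι]
    {v : Fin n → ι → ℤ} {A : Fin n → Finset ι}
    (hA : isAllocation A) (hP : Pareto v A) {o : ι} {src dst : Fin n}
    (ho : o ∈ A src) (hne : src ≠ dst)
    (h1 : v src o ≤ 0) (h2 : 0 < v dst o) : False := by
  classical
  have hdisj := hA.1
  have hod : o ∉ A dst := Finset.disjoint_left.mp (hdisj src dst hne) ho
  set B : Fin n → Finset ι := fun i =>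
    if i = src then (A src).erase o
    else if i = dst then insert o (A dst) else A i with hB
  have hBsrc : B src = (A src).erase o := by simp [hB]
  have hBdst : B dst = insert o (A dst) := by
    simp [hB, (Ne.symm hne)]
  have hBo : ∀ i, i ≠ src → i ≠ dst → B i = A i := by
    intro i h1' h2'; simp [hB, h1', h2']
  have hmem : ∀ t : Fin n, ∀ x, x ∈ B t → x ∈ A t ∨ (t = dst ∧ x = o) := by
    intro t x ht
    simp only [hB] at ht
    split_ifs at ht with hs hd
    · subst hs; exact Or.inl (Finset.mem_of_mem_erase ht)
    · rcases Finset.mem_insert.mp ht with h | h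
      · exact Or.inr ⟨hd, h⟩
      · exact Or.inl (by rw [hd]; exact h)
    · exact Or.inl ht
  apply hP
  refine ⟨B, ⟨?_, ?_⟩, ?_, dst, ?_⟩
  · intro i j hij
    rw [Finset.disjoint_left]
    intro x hxi hxj
    rcases hmem i x hxi with hi | ⟨hid, hxe⟩
    · rcases hmem j x hxj with hj | ⟨hjd, hxe⟩
      · exact Finset.disjoint_left.mp (hdisj i j hij) hi hj
      · rw [hxe] at hi
        by_cases his : i = src
        · subst his; rw [hBsrc] at hxi
          exact (Finset.mem_erase.mp hxi).1 hxe
        · exact Finset.disjoint_left.mp (hdisj i src his) hi ho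
    · rcases hmem j x hxj with hj | ⟨hjd, -⟩
      · rw [hxe] at hj
        by_cases hjs : j = src
        · subst hjs; rw [hBsrc] at hxj
          exact (Finset.mem_erase.mp hxj).1 hxe
        · exact Finset.disjoint_left.mp (hdisj j src hjs) hj ho
      · exact hij (hid.trans hjd.symm)
  · apply Finset.eq_univ_iff_forall.mpr
    intro x
    rw [Finset.mem_biUnion]
    by_cases hx : x = o
    · exact ⟨dst, Finset.mem_univ _, by rw [hBdst, hx]; exact Finset.mem_insert_self _ _⟩
    · obtain ⟨i, hi⟩ := exists_owner hA x
      refine ⟨i, Finset.mem_univ _, ?_⟩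
      by_cases his : i = src
      · subst his; rw [hBsrc]; exact Finset.mem_erase.mpr ⟨hx, hi⟩
      · by_cases hid : i = dst
        · subst hid; rw [hBdst]; exact Finset.mem_insert_of_mem hi
        · rw [hBo i his hid]; exact hi
  · intro i
    by_cases his : i = src
    · subst his
      rw [hBsrc, Finset.sum_erase_eq_sub ho]
      linarith
    · by_cases hid : i = dst
      · subst hid
        rw [hBdst, Finset.sum_insert hod]
        linarith
      · rw [hBo i his hid]
  · rw [hBdst, Finset.sum_insert hod]
    linarith

def embd (r : ℕ) : Fin (3 * r) ↪ Fin (3 * r + 2) :=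
  ⟨fun k => ⟨k.1, by omega⟩, by intro a b h; simpa [Fin.ext_iff] using h⟩

def oT (r : ℕ) : Fin (3 * r + 2) := ⟨3 * r, by omega⟩
def oB (r : ℕ) : Fin (3 * r + 2) := ⟨3 * r + 1, by omega⟩

@[simp] lemma embd_val (r : ℕ) (k : Fin (3 * r)) : (embd r k : ℕ) = k := rfl

lemma oT_ne_oB (r : ℕ) : oT r ≠ oB r := by
  intro h; have := congrArg Fin.val h; simp [oT, oB] at this

section vals
variable (r : ℕ) (T : ℤ) (b : Fin (3 * r) → ℤ)

lemma v13_set {i : Fin (r + 1)} (hi : (i : ℕ) < r) (k : Fin (3 * r)) :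
    v13 r T b i (embd r k) = b k := by
  simp [v13, hi, embd_val, k.isLt]

lemma v13_set' {i : Fin (r + 1)} (hi : (i : ℕ) < r) {o : Fin (3 * r + 2)}
    (h : (o : ℕ) < 3 * r) : v13 r T b i o = b ⟨o, h⟩ := by
  simp [v13, hi, h]

lemma v13_oT_set {i : Fin (r + 1)} (hi : (i : ℕ) < r) :
    v13 r T b i (oT r) = -T := by
  simp [v13, hi, oT]

lemma v13_oB_set {i : Fin (r + 1)} (hi : (i : ℕ) < r) :
    v13 r T b i (oB r) = -((r : ℤ) - 3) * T := by
  have h1 : ¬ (3 * r + 1 < 3 * r) := by omega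
  have h2 : ¬ (3 * r + 1 = 3 * r) := by omega
  simp [v13, hi, oB, h1, h2]

lemma v13_oT_dum (hr : 1 ≤ r) {i : Fin (r + 1)} (hi : ¬ (i : ℕ) < r) :
    v13 r T b i (oT r) = T := by
  have h1 : ¬ (3 * r < 3 * r - 1) := by omega
  have h2 : ¬ (3 * r = 3 * r - 1) := by omega
  simp [v13, hi, oT, h1, h2]

lemma v13_oB_dum (hr : 1 ≤ r) {i : Fin (r + 1)} (hi : ¬ (i : ℕ) < r) :
    v13 r T b i (oB r) = ((r : ℤ) - 1) * T := by
  have h1 : ¬ (3 * r + 1 < 3 * r - 1) := by omega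
  have h2 : ¬ (3 * r + 1 = 3 * r - 1) := by omega
  have h3 : ¬ (3 * r + 1 = 3 * r) := by omega
  simp [v13, hi, oB, h1, h2, h3]

lemma v13_set_dum_nonpos (hr : 2 ≤ r) (hT : 0 < T) {i : Fin (r + 1)}
    (hi : ¬ (i : ℕ) < r) {o : Fin (3 * r + 2)} (h : (o : ℕ) < 3 * r) :
    v13 r T b i o ≤ 0 := by
  have hcast : (2 : ℤ) ≤ (r : ℤ) := by exact_mod_cast hr
  simp only [v13, if_neg hi]
  by_cases h1 : (o : ℕ) < 3 * r - 1
  · simp [h1]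
  · have h2 : (o : ℕ) = 3 * r - 1 := by omega
    simp only [if_neg h1, if_pos h2]
    nlinarith

end vals

def Mfun (r : ℕ) (T : ℤ) (b : Fin (3 * r) → ℤ) : Fin (3 * r + 2) → ℤ :=
  fun o => if h : (o : ℕ) < 3 * r then b ⟨o, h⟩
           else if (o : ℕ) = 3 * r then T else ((r : ℤ) - 1) * T

lemma v13_le_M (r : ℕ) (hr : 4 ≤ r) (T : ℤ) (hT : 0 < T)
    (b : Fin (3 * r) → ℤ) (hb : ∀ k, 0 < b k) (i : Fin (r + 1))
    (o : Fin (3 * r + 2)) : v13 r T b i o ≤ Mfun r T b o := by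
  have hcast : (4 : ℤ) ≤ (r : ℤ) := by exact_mod_cast hr
  by_cases h : (o : ℕ) < 3 * r
  · rw [show Mfun r T b o = b ⟨o, h⟩ from dif_pos h]
    by_cases hi : (i : ℕ) < r
    · rw [v13_set' r T b hi h]
    · have := v13_set_dum_nonpos r T b (by omega) hT hi h
      have := hb ⟨o, h⟩
      linarith
  · by_cases h2 : (o : ℕ) = 3 * r
    · have ho : o = oT r := Fin.ext h2
      subst ho
      rw [show Mfun r T b (oT r) = T by simp [Mfun, oT]]
      by_cases hi : (i : ℕ) < r
      · rw [v13_oT_set r T b hi]; linarith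
      · rw [v13_oT_dum r T b (by omega) hi]
    · have ho : o = oB r := by
        have h3 := o.isLt
        have hv : (o : ℕ) = 3 * r + 1 := by omega
        exact Fin.ext (by rw [hv]; rfl)
      subst ho
      have hM : Mfun r T b (oB r) = ((r : ℤ) - 1) * T := by
        have h1 : ¬ (3 * r + 1 < 3 * r) := by omega
        have h2' : ¬ (3 * r + 1 = 3 * r) := by omega
        simp [Mfun, oB, h1, h2']
      rw [hM]
      by_cases hi : (i : ℕ) < r
      · rw [v13_oB_set r T b hi]; nlinarith
      · rw [v13_oB_dum r T b (by omega) hi]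

lemma sum_M (r : ℕ) (hr : 4 ≤ r) (T : ℤ) (b : Fin (3 * r) → ℤ)
    (hsum : ∑ k, b k = (r : ℤ) * T) :
    ∑ o, Mfun r T b o = 2 * ((r : ℤ) * T) := by
  have e1 : ∑ o : Fin (3 * r + 2), Mfun r T b o =
      (∑ o : Fin (3 * r + 1), Mfun r T b o.castSucc) + Mfun r T b (Fin.last (3 * r + 1)) :=
    Fin.sum_univ_castSucc _
  have e2 : ∑ o : Fin (3 * r + 1), Mfun r T b o.castSucc =
      (∑ k : Fin (3 * r), Mfun r T b (Fin.castSucc (Fin.castSucc k))) +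
        Mfun r T b (Fin.castSucc (Fin.last (3 * r))) :=
    Fin.sum_univ_castSucc _
  have h3 : Mfun r T b (Fin.last (3 * r + 1)) = ((r : ℤ) - 1) * T := by
    have h1 : ¬ (3 * r + 1 < 3 * r) := by omega
    have h2 : ¬ (3 * r + 1 = 3 * r) := by omega
    simp [Mfun, Fin.last, h1, h2]
  have h4 : Mfun r T b (Fin.castSucc (Fin.last (3 * r))) = T := by
    simp [Mfun, Fin.last]
  have h5 : ∀ k : Fin (3 * r), Mfun r T b (Fin.castSucc (Fin.castSucc k)) = b k := by
    intro k
    have hk : ((Fin.castSucc (Fin.castSucc k) : Fin (3 * r + 2)) : ℕ) = (k : ℕ) := rfl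
    rw [show Mfun r T b (Fin.castSucc (Fin.castSucc k)) = b ⟨k, k.isLt⟩ from by
      simp [Mfun, hk, k.isLt]]
  rw [e1, e2, h3, h4]
  simp only [h5]
  rw [hsum]; ring

lemma welfare_le (r : ℕ) (hr : 4 ≤ r) (T : ℤ) (hT : 0 < T)
    (b : Fin (3 * r) → ℤ) (hb : ∀ k, 0 < b k)
    (hsum : ∑ k, b k = (r : ℤ) * T)
    (B : Fin (r + 1) → Finset (Fin (3 * r + 2))) (hB : isAllocation B) :
    ∑ i, ∑ o ∈ B i, v13 r T b i o ≤ 2 * ((r : ℤ) * T) := by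
  have step1 : ∑ i, ∑ o ∈ B i, v13 r T b i o ≤ ∑ i, ∑ o ∈ B i, Mfun r T b o := by
    apply Finset.sum_le_sum
    intro i _
    exact Finset.sum_le_sum fun o _ => v13_le_M r hr T hT b hb i o
  have step2 : ∑ i, ∑ o ∈ B i, Mfun r T b o = ∑ o, Mfun r T b o := by
    rw [← Finset.sum_biUnion, hB.2]
    intro i _ j _ hij
    exact hB.1 i j hij
  calc ∑ i, ∑ o ∈ B i, v13 r T b i o ≤ ∑ i, ∑ o ∈ B i, Mfun r T b o := step1
    _ = ∑ o, Mfun r T b o := step2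
    _ = 2 * ((r : ℤ) * T) := sum_M r hr T b hsum

lemma backward_dir (r : ℕ) (hr : 4 ≤ r) (T : ℤ) (hT : 0 < T)
    (b : Fin (3 * r) → ℤ) (hb : ∀ k, 0 < b k)
    (hsum : ∑ k, b k = (r : ℤ) * T)
    (P : Fin (3 * r) → Fin r)
    (hP : ∀ j : Fin r, ∑ k ∈ Finset.univ.filter (fun k => P k = j), b k = T) :
    ∃ A : Fin (r + 1) → Finset (Fin (3 * r + 2)),
      isAllocation A ∧ EQ1 (v13 r T b) A ∧ Pareto (v13 r T b) A := by
  classical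
  have hrZ : (4 : ℤ) ≤ (r : ℤ) := by exact_mod_cast hr
  set A : Fin (r + 1) → Finset (Fin (3 * r + 2)) := fun i =>
    if h : (i : ℕ) < r then (univ.filter fun k => P k = ⟨i, h⟩).map (embd r)
    else {oT r, oB r} with hAdef
  have hAset : ∀ (i : Fin (r + 1)) (h : (i : ℕ) < r),
      A i = (univ.filter fun k => P k = ⟨i, h⟩).map (embd r) := by
    intro i h; simp [hAdef, h]
  have hAd : ∀ (i : Fin (r + 1)), ¬ (i : ℕ) < r → A i = {oT r, oB r} := by
    intro i h; simp [hAdef, h]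
  have hmem_lt : ∀ {i : Fin (r + 1)} (h : (i : ℕ) < r) {x : Fin (3 * r + 2)},
      x ∈ A i → ∃ k : Fin (3 * r), P k = ⟨i, h⟩ ∧ embd r k = x := by
    intro i h x hx
    rw [hAset i h] at hx
    obtain ⟨k, hk, hke⟩ := Finset.mem_map.mp hx
    exact ⟨k, (Finset.mem_filter.mp hk).2, hke⟩
  have hAlloc : isAllocation A := by
    constructor
    · intro i j hij
      rw [Finset.disjoint_left]
      intro x hxi hxj
      by_cases hi : (i : ℕ) < r <;> by_cases hj : (j : ℕ) < r
      · obtain ⟨k1, hk1, he1⟩ := hmem_lt hi hxi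
        obtain ⟨k2, hk2, he2⟩ := hmem_lt hj hxj
        have : k1 = k2 := (embd r).injective (he1.trans he2.symm)
        subst this
        rw [hk1] at hk2
        have hv : (i : ℕ) = (j : ℕ) := by simpa [Fin.ext_iff] using hk2
        exact hij (Fin.ext hv)
      · obtain ⟨k, -, he⟩ := hmem_lt hi hxi
        rw [hAd j hj] at hxj
        have hlt : (x : ℕ) < 3 * r := by rw [← he]; exact k.isLt
        rcases Finset.mem_insert.mp hxj with h | h
        · have := congrArg Fin.val h; simp [oT] at this; omega
        · have := congrArg Fin.val (Finset.mem_singleton.mp h); simp [oB] at this; omega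
      · obtain ⟨k, -, he⟩ := hmem_lt hj hxj
        rw [hAd i hi] at hxi
        have hlt : (x : ℕ) < 3 * r := by rw [← he]; exact k.isLt
        rcases Finset.mem_insert.mp hxi with h | h
        · have := congrArg Fin.val h; simp [oT] at this; omega
        · have := congrArg Fin.val (Finset.mem_singleton.mp h); simp [oB] at this; omega
      · exact hij (Fin.ext (by have := i.isLt; have := j.isLt; omega))
    · apply Finset.eq_univ_iff_forall.mpr
      intro x
      rw [Finset.mem_biUnion]
      by_cases hx : (x : ℕ) < 3 * r
      · set k : Fin (3 * r) := ⟨x, hx⟩ with hk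
        refine ⟨⟨(P k : ℕ), by have := (P k).isLt; omega⟩, Finset.mem_univ _, ?_⟩
        rw [hAset _ (by exact (P k).isLt)]
        apply Finset.mem_map.mpr
        exact ⟨k, Finset.mem_filter.mpr ⟨Finset.mem_univ _, Fin.ext rfl⟩, Fin.ext rfl⟩
      · refine ⟨⟨r, by omega⟩, Finset.mem_univ _, ?_⟩
        rw [hAd _ (by simp)]
        have h3 := x.isLt
        by_cases h : (x : ℕ) = 3 * r
        · exact Finset.mem_insert.mpr (Or.inl (Fin.ext h))
        · refine Finset.mem_insert.mpr (Or.inr ?_)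
          have : (x : ℕ) = 3 * r + 1 := by omega
          exact Finset.mem_singleton.mpr (Fin.ext this)
  have uset : ∀ (i : Fin (r + 1)) (h : (i : ℕ) < r),
      ∑ o ∈ A i, v13 r T b i o = T := by
    intro i h
    rw [hAset i h, Finset.sum_map]
    rw [Finset.sum_congr rfl fun k _ => v13_set r T b h k]
    exact hP ⟨i, h⟩
  have udum : ∀ (i : Fin (r + 1)), ¬ (i : ℕ) < r →
      ∑ o ∈ A i, v13 r T b i o = (r : ℤ) * T := by
    intro i h
    rw [hAd i h, Finset.sum_pair (oT_ne_oB r),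
      v13_oT_dum r T b (by omega) h, v13_oB_dum r T b (by omega) h]
    ring
  refine ⟨A, hAlloc, ?_, ?_⟩
  · intro i j hlt
    by_cases hi : (i : ℕ) < r <;> by_cases hj : (j : ℕ) < r
    · rw [uset i hi, uset j hj] at hlt; exact absurd hlt (lt_irrefl T)
    · left
      refine ⟨oB r, ?_, ?_, ?_⟩
      · rw [hAd j hj]; exact Finset.mem_insert.mpr (Or.inr (Finset.mem_singleton_self _))
      · rw [v13_oB_dum r T b (by omega) hj]; nlinarith
      · rw [Finset.sum_erase_eq_sub (by
          rw [hAd j hj]; exact Finset.mem_insert.mpr (Or.inr (Finset.mem_singleton_self _)))]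
        rw [udum j hj, v13_oB_dum r T b (by omega) hj, uset i hi]
        ring_nf
        linarith [le_refl T]
    · rw [udum i hi, uset j hj] at hlt; nlinarith
    · rw [udum i hi, udum j hj] at hlt; exact absurd hlt (lt_irrefl _)
  · rintro ⟨B, hB, hge, j0, hgt⟩
    have hub := welfare_le r hr T hT b hb hsum B hB
    have hua : ∑ i, ∑ o ∈ A i, v13 r T b i o = 2 * ((r : ℤ) * T) := by
      rw [Fin.sum_univ_castSucc]
      have h1 : ∀ i : Fin r, ∑ o ∈ A i.castSucc, v13 r T b i.castSucc o = T := by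
        intro i; exact uset _ (by simpa using i.isLt)
      have h2 : ∑ o ∈ A (Fin.last r), v13 r T b (Fin.last r) o = (r : ℤ) * T :=
        udum _ (by simp)
      rw [h2, Finset.sum_congr rfl fun i _ => h1 i, Finset.sum_const]
      simp [Finset.card_univ]
      ring
    have hlt2 : ∑ i, ∑ o ∈ A i, v13 r T b i o < ∑ i, ∑ o ∈ B i, v13 r T b i o :=
      Finset.sum_lt_sum (fun i _ => hge i) ⟨j0, Finset.mem_univ _, hgt⟩
    linarith

lemma forward_dir (r : ℕ) (hr : 4 ≤ r) (T : ℤ) (hT : 0 < T)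
    (b : Fin (3 * r) → ℤ) (hb : ∀ k, 0 < b k)
    (hsum : ∑ k, b k = (r : ℤ) * T)
    (A : Fin (r + 1) → Finset (Fin (3 * r + 2)))
    (hAlloc : isAllocation A) (hEQ : EQ1 (v13 r T b) A)
    (hPO : Pareto (v13 r T b) A) :
    ∃ P : Fin (3 * r) → Fin r, ∀ j : Fin r,
      ∑ k ∈ Finset.univ.filter (fun k => P k = j), b k = T := by
  classical
  have hrZ : (4 : ℤ) ≤ (r : ℤ) := by exact_mod_cast hr
  set dum : Fin (r + 1) := ⟨r, by omega⟩ with hdum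
  have hdumval : (dum : ℕ) = r := rfl
  have hdumnlt : ¬ (dum : ℕ) < r := by rw [hdumval]; omega
  have hne_dum : ∀ i : Fin (r + 1), (i : ℕ) < r → i ≠ dum := by
    intro i hi h
    rw [Fin.ext_iff, hdumval] at h
    omega
  -- the two chores go to the dummy
  have hoT : oT r ∈ A dum := by
    obtain ⟨i, hi⟩ := exists_owner hAlloc (oT r)
    by_cases h : (i : ℕ) < r
    · exfalso
      refine pareto_move hAlloc hPO hi (hne_dum i h) ?_ ?_
      · rw [v13_oT_set r T b h]; linarith
      · rw [v13_oT_dum r T b (by omega) hdumnlt]; exact hT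
    · have : i = dum := Fin.ext (by rw [hdumval]; have := i.isLt; omega)
      rwa [this] at hi
  have hoB : oB r ∈ A dum := by
    obtain ⟨i, hi⟩ := exists_owner hAlloc (oB r)
    by_cases h : (i : ℕ) < r
    · exfalso
      refine pareto_move hAlloc hPO hi (hne_dum i h) ?_ ?_
      · rw [v13_oB_set r T b h]; nlinarith
      · rw [v13_oB_dum r T b (by omega) hdumnlt]; nlinarith
    · have : i = dum := Fin.ext (by rw [hdumval]; have := i.isLt; omega)
      rwa [this] at hi
  -- set items go to real agents
  have hsetk : ∀ k : Fin (3 * r), ∃ i : Fin (r + 1), (i : ℕ) < r ∧ embd r k ∈ A i := by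
    intro k
    obtain ⟨i, hi⟩ := exists_owner hAlloc (embd r k)
    by_cases h : (i : ℕ) < r
    · exact ⟨i, h, hi⟩
    · exfalso
      set a0 : Fin (r + 1) := ⟨0, by omega⟩ with ha0
      have ha0v : (a0 : ℕ) = 0 := rfl
      refine pareto_move hAlloc hPO hi (show i ≠ a0 from ?_) ?_ ?_
      · intro hh; rw [Fin.ext_iff, ha0v] at hh; omega
      · exact v13_set_dum_nonpos r T b (by omega) hT h (by rw [embd_val]; exact k.isLt)
      · rw [v13_set r T b (by rw [ha0v]; omega) k]; exact hb k
  set P : Fin (3 * r) → Fin r := fun k =>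
    ⟨(Classical.choose (hsetk k)).1, (Classical.choose_spec (hsetk k)).1⟩ with hPdef
  set lf : Fin r → Fin (r + 1) := fun j => ⟨(j : ℕ), by omega⟩ with hlf
  have hlfv : ∀ j : Fin r, ((lf j : Fin (r + 1)) : ℕ) = (j : ℕ) := fun j => rfl
  have hlf_ne_dum : ∀ j : Fin r, lf j ≠ dum := fun j => hne_dum _ (by rw [hlfv]; exact j.isLt)
  have hlf_inj : ∀ j j' : Fin r, lf j = lf j' → j = j' := by
    intro j j' h; rw [Fin.ext_iff] at h ⊢; exact h
  have hPmem : ∀ k : Fin (3 * r), embd r k ∈ A (lf (P k)) := by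
    intro k
    have : lf (P k) = Classical.choose (hsetk k) := Fin.ext (by simp [hlf, hPdef])
    rw [this]
    exact (Classical.choose_spec (hsetk k)).2
  -- bundles of real agents contain only set items
  have hlt3r : ∀ (j : Fin r) {x : Fin (3 * r + 2)}, x ∈ A (lf j) → (x : ℕ) < 3 * r := by
    intro j x hx
    have hno : x ∉ A dum :=
      Finset.disjoint_left.mp (hAlloc.1 (lf j) dum (hlf_ne_dum j)) hx
    by_contra h
    have h3 := x.isLt
    by_cases h2 : (x : ℕ) = 3 * r
    · exact hno (by rw [show x = oT r from Fin.ext h2]; exact hoT)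
    · have hx1 : (x : ℕ) = 3 * r + 1 := by omega
      exact hno (by rw [show x = oB r from Fin.ext hx1]; exact hoB)
  have hitem_pos : ∀ (j : Fin r) {o : Fin (3 * r + 2)}, o ∈ A (lf j) →
      0 < v13 r T b (lf j) o := by
    intro j o ho
    rw [v13_set' r T b (by rw [hlfv]; exact j.isLt) (hlt3r j ho)]
    exact hb _
  have hupos : ∀ j : Fin r, 0 ≤ ∑ o ∈ A (lf j), v13 r T b (lf j) o :=
    fun j => Finset.sum_nonneg fun o ho => (hitem_pos j ho).le
  -- dummy's bundle and utility
  have A_dum_eq : A dum = {oT r, oB r} := by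
    ext x
    constructor
    · intro hx
      by_cases h : (x : ℕ) < 3 * r
      · exfalso
        have hx2 : x = embd r ⟨x, h⟩ := Fin.ext rfl
        have hmem := hPmem ⟨x, h⟩
        rw [← hx2] at hmem
        exact Finset.disjoint_left.mp
          (hAlloc.1 dum (lf (P ⟨x, h⟩)) (Ne.symm (hlf_ne_dum _))) hx hmem
      · have h3 := x.isLt
        by_cases h2 : (x : ℕ) = 3 * r
        · exact Finset.mem_insert.mpr (Or.inl (Fin.ext h2))
        · refine Finset.mem_insert.mpr (Or.inr (Finset.mem_singleton.mpr ?_))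
          have hx1 : (x : ℕ) = 3 * r + 1 := by omega
          exact Fin.ext hx1
    · intro hx
      rcases Finset.mem_insert.mp hx with h | h
      · rwa [h]
      · rw [Finset.mem_singleton.mp h]; exact hoB
  have hud : ∑ o ∈ A dum, v13 r T b dum o = (r : ℤ) * T := by
    rw [A_dum_eq, Finset.sum_pair (oT_ne_oB r),
      v13_oT_dum r T b (by omega) hdumnlt, v13_oB_dum r T b (by omega) hdumnlt]
    ring
  -- fibers of P are exactly the real agents' bundles
  have hfibA : ∀ j : Fin r,
      A (lf j) = (univ.filter fun k => P k = j).map (embd r) := by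
    intro j
    ext x
    constructor
    · intro hx
      have h : (x : ℕ) < 3 * r := hlt3r j hx
      have hx2 : x = embd r ⟨x, h⟩ := Fin.ext rfl
      have hmem := hPmem ⟨x, h⟩
      rw [← hx2] at hmem
      have hPj : P ⟨x, h⟩ = j := by
        by_contra hne
        have hnel : lf (P ⟨x, h⟩) ≠ lf j := fun hh => hne (hlf_inj _ _ hh)
        exact Finset.disjoint_left.mp (hAlloc.1 _ _ hnel) hmem hx
      exact Finset.mem_map.mpr
        ⟨⟨x, h⟩, Finset.mem_filter.mpr ⟨Finset.mem_univ _, hPj⟩, Fin.ext rfl⟩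
    · intro hx
      obtain ⟨k, hk, hke⟩ := Finset.mem_map.mp hx
      have hPj : P k = j := (Finset.mem_filter.mp hk).2
      rw [← hke, ← hPj]
      exact hPmem k
  have uset_eq : ∀ j : Fin r,
      ∑ o ∈ A (lf j), v13 r T b (lf j) o =
        ∑ k ∈ Finset.univ.filter (fun k => P k = j), b k := by
    intro j
    rw [hfibA j, Finset.sum_map]
    exact Finset.sum_congr rfl fun k _ => v13_set r T b (by rw [hlfv]; exact j.isLt) k
  have hsum_u : ∑ j : Fin r, ∑ o ∈ A (lf j), v13 r T b (lf j) o = (r : ℤ) * T := by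
    rw [Finset.sum_congr rfl fun j _ => uset_eq j, Finset.sum_fiberwise, hsum]
  -- EQ1 forces each real agent to get at least T
  have hTle : ∀ j : Fin r, ∑ o ∈ A (lf j), v13 r T b (lf j) o < (r : ℤ) * T →
      T ≤ ∑ o ∈ A (lf j), v13 r T b (lf j) o := by
    intro j hlt
    rcases hEQ (lf j) dum (by rw [hud]; exact hlt) with
      ⟨g, hg, hg0, hsumle⟩ | ⟨c, hc, hc0, -⟩
    · have hgle : v13 r T b dum g ≤ ((r : ℤ) - 1) * T := by
        rw [A_dum_eq] at hg
        rcases Finset.mem_insert.mp hg with h | h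
        · rw [h, v13_oT_dum r T b (by omega) hdumnlt]; nlinarith
        · rw [Finset.mem_singleton.mp h, v13_oB_dum r T b (by omega) hdumnlt]
      rw [Finset.sum_erase_eq_sub hg, hud] at hsumle
      linarith
    · exact absurd hc0 (not_le.mpr (hitem_pos j hc))
  -- all real agents get less than rT
  have hall_lt : ∀ j : Fin r, ∑ o ∈ A (lf j), v13 r T b (lf j) o < (r : ℤ) * T := by
    by_contra hcon
    push_neg at hcon
    obtain ⟨j0, hj0⟩ := hcon
    have hj1 : ∃ j1 : Fin r, j1 ≠ j0 := by
      by_cases h : j0 = ⟨0, by omega⟩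
      · exact ⟨⟨1, by omega⟩, by rw [h]; intro hh; rw [Fin.ext_iff] at hh; simp at hh⟩
      · exact ⟨⟨0, by omega⟩, fun hh => h (hh ▸ rfl)⟩
    obtain ⟨j1, hj1⟩ := hj1
    have hpair : ∑ o ∈ A (lf j0), v13 r T b (lf j0) o +
        ∑ o ∈ A (lf j1), v13 r T b (lf j1) o ≤
        ∑ j : Fin r, ∑ o ∈ A (lf j), v13 r T b (lf j) o := by
      have hps := Finset.sum_le_sum_of_subset_of_nonneg
        (Finset.subset_univ ({j0, j1} : Finset (Fin r))) (fun j _ _ => hupos j)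
      rw [Finset.sum_pair (Ne.symm hj1)] at hps
      exact hps
    rw [hsum_u] at hpair
    have h0 : ∑ o ∈ A (lf j1), v13 r T b (lf j1) o ≤ 0 := by linarith
    have h1 : ∑ o ∈ A (lf j1), v13 r T b (lf j1) o = 0 := le_antisymm h0 (hupos j1)
    have h2 : T ≤ 0 := by
      have := hTle j1 (by rw [h1]; nlinarith)
      linarith
    linarith
  have hTle' : ∀ j : Fin r, T ≤ ∑ o ∈ A (lf j), v13 r T b (lf j) o :=
    fun j => hTle j (hall_lt j)
  -- conclude each real agent gets exactly T
  refine ⟨P, fun j => ?_⟩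
  rw [← uset_eq j]
  have hle : ∑ o ∈ A (lf j), v13 r T b (lf j) o ≤ T := by
    have hsplit := Finset.add_sum_erase Finset.univ
      (fun j => ∑ o ∈ A (lf j), v13 r T b (lf j) o) (Finset.mem_univ j)
    have hcard : ((Finset.univ.erase j).card : ℤ) = (r : ℤ) - 1 := by
      rw [Finset.card_erase_of_mem (Finset.mem_univ j), Finset.card_univ,
        Fintype.card_fin]
      push_cast [Nat.cast_sub (by omega : 1 ≤ r)]
      ring
    have hrest : ((r : ℤ) - 1) * T ≤
        ∑ x ∈ Finset.univ.erase j, ∑ o ∈ A (lf x), v13 r T b (lf x) o := by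
      have := Finset.card_nsmul_le_sum (Finset.univ.erase j)
        (fun x => ∑ o ∈ A (lf x), v13 r T b (lf x) o) T (fun x _ => hTle' x)
      rw [nsmul_eq_mul] at this
      rw [← hcard]
      exact_mod_cast this
    rw [hsum_u] at hsplit
    linarith
  linarith [hTle' j]

/-- The reduced instance admits an EQ1 and Pareto optimal allocation iff
`{b_1, …, b_{3r}}` can be partitioned into `r` subsets each summing to `T`. -/
theorem stmt13 (r : ℕ) (hr : 4 ≤ r) (T : ℤ) (hT : 0 < T)
    (b : Fin (3 * r) → ℤ) (hb : ∀ k, 0 < b k)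
    (hsum : ∑ k, b k = (r : ℤ) * T) :
    (∃ A : Fin (r + 1) → Finset (Fin (3 * r + 2)),
        isAllocation A ∧ EQ1 (v13 r T b) A ∧ Pareto (v13 r T b) A) ↔
      ∃ P : Fin (3 * r) → Fin r, ∀ j : Fin r,
        ∑ k ∈ Finset.univ.filter (fun k => P k = j), b k = T := by
  constructor
  · rintro ⟨A, h1, h2, h3⟩
    exact forward_dir r hr T hT b hb hsum A h1 h2 h3
  · rintro ⟨P, hP⟩
    exact backward_dir r hr T hT b hb hsum P hP
end

section
/- Consider a fair division instance with v_i(o) ∈ {-1, 0, 1} for all agents i and items o in which every item is valued at 1 by at least one agent. An allocation is Pareto optimal if and only if it assigns every item to an agent who values that item at 1, which holds if and only if ∑_{i} v_i(A_i) = m (the total number of items). -/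
open Finset

/-- In a {-1,0,1} instance where every item is valued at 1 by some agent,
an allocation is Pareto optimal iff every item goes to an agent valuing it
at 1, iff the total utility equals the number of items. -/
theorem stmt14 {n : ℕ} {ι : Type*} [Fintype ι] [DecidableEq ι]
    (v : Fin n → ι → ℤ)
    (htri : ∀ i o, v i o = -1 ∨ v i o = 0 ∨ v i o = 1)
    (hlove : ∀ o : ι, ∃ i, v i o = 1)
    (A : Fin n → Finset ι) (hA : isAllocation A) :
    (Pareto v A ↔ ∀ i : Fin n, ∀ o ∈ A i, v i o = 1) ∧
    ((∀ i : Fin n, ∀ o ∈ A i, v i o = 1) ↔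
      ∑ i : Fin n, ∑ o ∈ A i, v i o = (Fintype.card ι : ℤ)) := by
  obtain ⟨hdis, hcov⟩ := hA
  have hle1 : ∀ i o, v i o ≤ 1 := fun i o => by rcases htri i o with h|h|h <;> omega
  have hcardgen : ∀ B : Fin n → Finset ι, isAllocation B →
      ∑ k : Fin n, ((B k).card : ℤ) = (Fintype.card ι : ℤ) := by
    intro B ⟨hBd, hBc⟩
    have : ∑ k : Fin n, (B k).card = Fintype.card ι := by
      rw [← Finset.card_biUnion (fun i _ j _ h => hBd i j h), hBc, Finset.card_univ]
    exact_mod_cast congrArg (Nat.cast : ℕ → ℤ) this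
  have hcard : ∑ k : Fin n, ((A k).card : ℤ) = (Fintype.card ι : ℤ) :=
    hcardgen A ⟨hdis, hcov⟩
  have key : ∀ (B : Fin n → Finset ι) (k : Fin n),
      ∑ o ∈ B k, v k o ≤ ((B k).card : ℤ) := fun B k =>
    calc ∑ o ∈ B k, v k o ≤ ∑ _o ∈ B k, (1:ℤ) :=
          Finset.sum_le_sum (fun o _ => hle1 k o)
      _ = ((B k).card : ℤ) := by simp
  have hiff2 : (∀ i : Fin n, ∀ o ∈ A i, v i o = 1) ↔
      ∑ i : Fin n, ∑ o ∈ A i, v i o = (Fintype.card ι : ℤ) := by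
    constructor
    · intro h
      calc ∑ i, ∑ o ∈ A i, v i o = ∑ i, ∑ o ∈ A i, (1:ℤ) :=
            Finset.sum_congr rfl (fun i _ => Finset.sum_congr rfl (fun o ho => h i o ho))
        _ = ∑ i, ((A i).card : ℤ) := by simp
        _ = (Fintype.card ι : ℤ) := hcard
    · intro h i o ho
      by_contra hne
      have hvi : v i o ≤ 0 := by rcases htri i o with h'|h'|h' <;> omega
      have hi : ∑ o' ∈ A i, v i o' < ((A i).card : ℤ) := by
        have := Finset.sum_lt_sum (f := v i) (g := fun _ => (1:ℤ)) (s := A i)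
          (fun o' _ => hle1 i o') ⟨o, ho, show v i o < 1 by omega⟩
        simpa using this
      have hlt : ∑ k, ∑ o ∈ A k, v k o < ∑ k, ((A k).card : ℤ) :=
        Finset.sum_lt_sum (fun k _ => key A k) ⟨i, Finset.mem_univ i, hi⟩
      omega
  refine ⟨?_, hiff2⟩
  constructor
  · intro hP
    by_contra hne
    push_neg at hne
    obtain ⟨i, o, ho, hvo⟩ := hne
    obtain ⟨j, hj⟩ := hlove o
    have hij : i ≠ j := by rintro rfl; exact hvo hj
    have honly : ∀ k : Fin n, k ≠ i → o ∉ A k := fun k hk hok =>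
      (Finset.disjoint_left.mp (hdis i k (Ne.symm hk)) ho) hok
    have hoj : o ∉ A j := honly j (Ne.symm hij)
    set B : Fin n → Finset ι := fun k =>
      if k = i then (A i).erase o else if k = j then insert o (A j) else A k with hB
    have hmem : ∀ (k : Fin n) (x : ι),
        x ∈ B k ↔ (x ∈ A k ∧ x ≠ o) ∨ (k = j ∧ x = o) := by
      intro k x
      by_cases hki : k = i
      · subst hki
        simp only [hB, if_pos rfl, Finset.mem_erase]
        constructor
        · rintro ⟨hxo, hx⟩; exact Or.inl ⟨hx, hxo⟩
        · rintro (⟨hx, hxo⟩ | ⟨hj', _⟩)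
          · exact ⟨hxo, hx⟩
          · exact absurd hj' hij
      · by_cases hkj : k = j
        · subst hkj
          simp only [hB, if_neg hki, if_true, Finset.mem_insert]
          constructor
          · rintro (rfl | hx)
            · exact Or.inr ⟨by trivial, rfl⟩
            · exact Or.inl ⟨hx, fun h => hoj (h ▸ hx)⟩
          · rintro (⟨hx, _⟩ | ⟨_, rfl⟩)
            · exact Or.inr hx
            · exact Or.inl rfl
        · simp only [hB, if_neg hki, if_neg hkj]
          constructor
          · intro hx
            exact Or.inl ⟨hx, fun h => honly k hki (h ▸ hx)⟩
          · rintro (⟨hx, _⟩ | ⟨rfl, _⟩)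
            · exact hx
            · exact absurd rfl hkj
    have hvi : v i o ≤ 0 := by rcases htri i o with h'|h'|h' <;> omega
    refine hP ⟨B, ⟨?disj, ?cov⟩, ?ge, j, ?gt⟩
    case disj =>
      intro k l hkl
      rw [Finset.disjoint_left]
      intro x hxk hxl
      rcases (hmem k x).mp hxk with ⟨hk, hk'⟩ | ⟨rfl, hx1⟩
      · rcases (hmem l x).mp hxl with ⟨hl, _⟩ | ⟨rfl, hx2⟩
        · exact Finset.disjoint_left.mp (hdis k l hkl) hk hl
        · exact hk' hx2
      · rcases (hmem l x).mp hxl with ⟨hl, hl'⟩ | ⟨rfl, _⟩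
        · exact hl' hx1
        · exact hkl rfl
    case cov =>
      ext x
      simp only [Finset.mem_biUnion, Finset.mem_univ, iff_true, true_and]
      by_cases hxo : x = o
      · exact ⟨j, (hmem j x).mpr (Or.inr ⟨rfl, hxo⟩)⟩
      · have : x ∈ Finset.univ.biUnion A := by rw [hcov]; exact Finset.mem_univ x
        obtain ⟨k, _, hk⟩ := Finset.mem_biUnion.mp this
        exact ⟨k, (hmem k x).mpr (Or.inl ⟨hk, hxo⟩)⟩
    case ge =>
      intro k
      by_cases hki : k = i
      · have hbk : B k = (A i).erase o := by rw [hB]; simp [hki]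
        have hsub : ∑ o' ∈ (A i).erase o, v i o' = ∑ o' ∈ A i, v i o' - v i o :=
          Finset.sum_erase_eq_sub ho
        rw [hbk, hki]
        omega
      · by_cases hkj : k = j
        · have hbk : B k = insert o (A j) := by
            rw [hB]; simp [hkj, Ne.symm hij]
          rw [hbk, hkj, Finset.sum_insert hoj]
          omega
        · have hbk : B k = A k := by rw [hB]; simp [hki, hkj]
          rw [hbk]
    case gt =>
      have hji : j ≠ i := Ne.symm hij
      have hbj : B j = insert o (A j) := by rw [hB]; simp [hji]
      rw [hbj, Finset.sum_insert hoj]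
      omega
  · intro h1
    rintro ⟨B, hBalloc, hge, j, hgt⟩
    have hBcard := hcardgen B hBalloc
    have hBle : ∑ k, ∑ o ∈ B k, v k o ≤ ∑ k, ((B k).card : ℤ) :=
      Finset.sum_le_sum (fun k _ => key B k)
    have hAeq : ∑ k, ∑ o ∈ A k, v k o = (Fintype.card ι : ℤ) := hiff2.mp h1
    have hlt : ∑ k, ∑ o ∈ A k, v k o < ∑ k, ∑ o ∈ B k, v k o :=
      Finset.sum_lt_sum (fun k _ => hge k) ⟨j, Finset.mem_univ j, hgt⟩
    omega
end
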